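/- Let m ≥ 1 be an integer, μ > 0 real, and P_μ^m(η) = (1−μ)(2−μ)(3−μ)(4−μ) + 5(m+1)(1−μ)(5−3μ)(2−μ)μη + 5(m+1)(m+2)(1−μ)(7−5μ)μ²η² + 10(m+1)(m+2)(m+3)(1−μ)μ³η³ + (m+1)(m+2)(m+3)(m+4)μ⁴η⁴. For m ≥ 8, all complex roots of P_μ^m lie in the closed half-plane {η ∈ ℂ : Re η ≤ 1/2} for every μ > 0. For 1 ≤ m ≤ 7, all complex roots of P_μ^m lie in {Re η ≤ 1/2} if and only if 0 < μ ≤ μ_m, where μ_m is the smallest positive root of q_m(μ) = P_μ^m(1/2). -/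
import Mathlib


/-- The representative polynomial `P_μ^m` of type `I_{1,4}` (complex variable). -/
noncomputable def PI14c (m : ℕ) (μ : ℝ) (η : ℂ) : ℂ :=
  (1 - (μ : ℂ)) * (2 - (μ : ℂ)) * (3 - (μ : ℂ)) * (4 - (μ : ℂ)) +
    5 * ((m : ℂ) + 1) * (1 - (μ : ℂ)) * (5 - 3 * (μ : ℂ)) * (2 - (μ : ℂ)) * (μ : ℂ) * η +
    5 * ((m : ℂ) + 1) * ((m : ℂ) + 2) * (1 - (μ : ℂ)) * (7 - 5 * (μ : ℂ)) * (μ : ℂ) ^ 2 * η ^ 2 +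
    10 * ((m : ℂ) + 1) * ((m : ℂ) + 2) * ((m : ℂ) + 3) * (1 - (μ : ℂ)) * (μ : ℂ) ^ 3 * η ^ 3 +
    ((m : ℂ) + 1) * ((m : ℂ) + 2) * ((m : ℂ) + 3) * ((m : ℂ) + 4) * (μ : ℂ) ^ 4 * η ^ 4

/-- The representative polynomial `P_μ^m` of type `I_{1,4}` (real variable). -/
noncomputable def PI14 (m : ℕ) (μ η : ℝ) : ℝ :=
  (1 - μ) * (2 - μ) * (3 - μ) * (4 - μ) +
    5 * ((m : ℝ) + 1) * (1 - μ) * (5 - 3 * μ) * (2 - μ) * μ * η +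
    5 * ((m : ℝ) + 1) * ((m : ℝ) + 2) * (1 - μ) * (7 - 5 * μ) * μ ^ 2 * η ^ 2 +
    10 * ((m : ℝ) + 1) * ((m : ℝ) + 2) * ((m : ℝ) + 3) * (1 - μ) * μ ^ 3 * η ^ 3 +
    ((m : ℝ) + 1) * ((m : ℝ) + 2) * ((m : ℝ) + 3) * ((m : ℝ) + 4) * μ ^ 4 * η ^ 4

/-- `q_m(μ) = P_μ^m(1/2)` for type `I_{1,4}`. -/
noncomputable def qI14 (m : ℕ) (μ : ℝ) : ℝ := PI14 m μ (1 / 2)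

set_option maxHeartbeats 2000000
noncomputable def B1 (m : ℕ) (μ : ℝ) : ℝ := 50*μ^1 + -35*μ^2 + -5*μ^3 + 2*μ^4 + 50*(m:ℝ)^1*μ^1 + (-55/2)*(m:ℝ)^1*μ^3 + (5/2)*(m:ℝ)^1*μ^4 + 35*(m:ℝ)^2*μ^2 + -15*(m:ℝ)^2*μ^3 + (-5/2)*(m:ℝ)^2*μ^4 + (15/2)*(m:ℝ)^3*μ^3 + (-5/2)*(m:ℝ)^3*μ^4 + (1/2)*(m:ℝ)^4*μ^4
noncomputable def B2 (m : ℕ) (μ : ℝ) : ℝ := 70*μ^2 + -30*μ^3 + -4*μ^4 + 105*(m:ℝ)^1*μ^2 + -15*(m:ℝ)^1*μ^3 + -15*(m:ℝ)^1*μ^4 + 35*(m:ℝ)^2*μ^2 + 30*(m:ℝ)^2*μ^3 + (-25/2)*(m:ℝ)^2*μ^4 + 15*(m:ℝ)^3*μ^3 + (3/2)*(m:ℝ)^4*μ^4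
noncomputable def B3 (m : ℕ) (μ : ℝ) : ℝ := 60*μ^3 + -12*μ^4 + 110*(m:ℝ)^1*μ^3 + -10*(m:ℝ)^1*μ^4 + 60*(m:ℝ)^2*μ^3 + 10*(m:ℝ)^2*μ^4 + 10*(m:ℝ)^3*μ^3 + 10*(m:ℝ)^3*μ^4 + 2*(m:ℝ)^4*μ^4
noncomputable def B4 (m : ℕ) (μ : ℝ) : ℝ := 24*μ^4 + 50*(m:ℝ)^1*μ^4 + 35*(m:ℝ)^2*μ^4 + 10*(m:ℝ)^3*μ^4 + 1*(m:ℝ)^4*μ^4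
theorem quartic_stable (a0 a1 a2 a3 a4 : ℝ) (hb4 : 0 < a4) (hb3 : 0 < a3)
    (hb2 : 0 ≤ a2) (hb1 : 0 ≤ a1) (hb0 : 0 ≤ a0)
    (hD : 0 ≤ a1*a2*a3 - a1^2*a4 - a0*a3^2)
    (hA1 : 0 ≤ 2*a2^2*a3 + 2*a1*a3^2 - 8*a0*a3*a4)
    (hA2 : 0 ≤ 8*a2*a3^2 + 4*a2^2*a4 + 4*a1*a3*a4 - 16*a0*a4^2)
    (z : ℂ)
    (hz : (a4:ℂ)*z^4 + (a3:ℂ)*z^3 + (a2:ℂ)*z^2 + (a1:ℂ)*z + (a0:ℂ) = 0) :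
    z.re ≤ 0 := by
  by_contra hx
  push_neg at hx
  obtain ⟨x, y⟩ := z
  have hzeq : Complex.mk x y = (x:ℂ) + (y:ℂ)*Complex.I := by
    apply Complex.ext <;> simp
  rw [hzeq] at hz
  have hx' : 0 < x := hx
  rw [Complex.ext_iff] at hz
  obtain ⟨h1, h2⟩ := hz
  simp only [Complex.add_re, Complex.add_im, Complex.mul_re, Complex.mul_im,
    Complex.ofReal_re, Complex.ofReal_im, Complex.I_re, Complex.I_im,
    Complex.zero_re, Complex.zero_im, pow_succ, pow_zero, Complex.one_re,
    Complex.one_im] at h1 h2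
  have hre : a4*(x^4 - 6*x^2*y^2 + y^4) + a3*(x^3-3*x*y^2) + a2*(x^2-y^2) + a1*x + a0 = 0 := by
    linear_combination h1
  have him : y*((4*a4*x^3 + 3*a3*x^2 + 2*a2*x + a1) - (4*a4*x+a3)*y^2) = 0 := by
    linear_combination h2
  rcases mul_eq_zero.mp him with hy | hG
  · have hre0 : a4*x^4 + a3*x^3 + a2*x^2 + a1*x + a0 = 0 := by
      rw [hy] at hre; linear_combination hre
    nlinarith [mul_pos hb4 (pow_pos hx' 4), mul_pos hb3 (pow_pos hx' 3),
      mul_nonneg hb2 (pow_pos hx' 2).le, mul_nonneg hb1 hx'.le]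
  · have key : (a1*a2*a3 - a1^2*a4 - a0*a3^2)
        + (2*a2^2*a3 + 2*a1*a3^2 - 8*a0*a3*a4)*x
        + (8*a2*a3^2 + 4*a2^2*a4 + 4*a1*a3*a4 - 16*a0*a4^2)*x^2
        + (8*a3^3 + 32*a2*a3*a4)*x^3
        + (48*a3^2*a4 + 32*a2*a4^2)*x^4
        + 96*a3*a4^2*x^5 + 64*a4^3*x^6 = 0 := by
      linear_combination (-(4*a4*x+a3)^2) * hre
        - (a4*(y^2*(4*a4*x+a3) + (4*a4*x^3+3*a3*x^2+2*a2*x+a1))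
           - (6*a4*x^2+3*a3*x+a2)*(4*a4*x+a3)) * hG
    have t1 : 0 ≤ (2*a2^2*a3 + 2*a1*a3^2 - 8*a0*a3*a4)*x := mul_nonneg hA1 hx'.le
    have t2 : 0 ≤ (8*a2*a3^2 + 4*a2^2*a4 + 4*a1*a3*a4 - 16*a0*a4^2)*x^2 :=
      mul_nonneg hA2 (pow_pos hx' 2).le
    have t3 : 0 ≤ (8*a3^3 + 32*a2*a3*a4)*x^3 :=
      mul_nonneg (add_nonneg (mul_nonneg (by norm_num) (pow_nonneg hb3.le 3))
        (mul_nonneg (mul_nonneg (mul_nonneg (by norm_num) hb2) hb3.le) hb4.le))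
        (pow_pos hx' 3).le
    have t4 : 0 ≤ (48*a3^2*a4 + 32*a2*a4^2)*x^4 :=
      mul_nonneg (add_nonneg (mul_nonneg (mul_nonneg (by norm_num) (pow_nonneg hb3.le 2)) hb4.le)
        (mul_nonneg (mul_nonneg (by norm_num) hb2) (pow_nonneg hb4.le 2)))
        (pow_pos hx' 4).le
    have t5 : 0 ≤ 96*a3*a4^2*x^5 :=
      mul_nonneg (mul_nonneg (mul_nonneg (by norm_num) hb3.le) (pow_nonneg hb4.le 2))
        (pow_pos hx' 5).le
    have t6 : 0 < 64*a4^3*x^6 :=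
      mul_pos (mul_pos (by norm_num) (pow_pos hb4 3)) (pow_pos hx' 6)
    linarith

lemma shiftQ (m : ℕ) (μ : ℝ) (η : ℂ) :
    PI14c m μ η = ((B4 m μ : ℝ):ℂ)*(η - 1/2)^4 + ((B3 m μ : ℝ):ℂ)*(η - 1/2)^3
      + ((B2 m μ : ℝ):ℂ)*(η - 1/2)^2 + ((B1 m μ : ℝ):ℂ)*(η - 1/2) + ((qI14 m μ : ℝ):ℂ) := by
  simp only [PI14c, B1, B2, B3, B4, qI14, PI14]
  push_cast
  ring

lemma stable_of (m : ℕ) (μ : ℝ) (hm : 1 ≤ m) (hμ : 0 < μ)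
    (hb1 : 0 ≤ B1 m μ) (hb2 : 0 ≤ B2 m μ) (hb0 : 0 ≤ qI14 m μ)
    (hD : 0 ≤ B1 m μ * B2 m μ * B3 m μ - (B1 m μ)^2 * B4 m μ - qI14 m μ * (B3 m μ)^2)
    (hA1 : 0 ≤ 2*(B2 m μ)^2*(B3 m μ) + 2*(B1 m μ)*(B3 m μ)^2 - 8*(qI14 m μ)*(B3 m μ)*(B4 m μ))
    (hA2 : 0 ≤ 8*(B2 m μ)*(B3 m μ)^2 + 4*(B2 m μ)^2*(B4 m μ) + 4*(B1 m μ)*(B3 m μ)*(B4 m μ)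
            - 16*(qI14 m μ)*(B4 m μ)^2) :
    ∀ η : ℂ, PI14c m μ η = 0 → η.re ≤ 1 / 2 := by
  intro η hη
  have hM : (1:ℝ) ≤ (m:ℝ) := by exact_mod_cast hm
  have hb3 : 0 < B3 m μ := by
    have e : B3 m μ = 2*((m:ℝ)+1)*((m:ℝ)+2)*((m:ℝ)+3)*μ^3*(5+((m:ℝ)-1)*μ) := by
      simp only [B3]; ring
    rw [e]
    have h5 : (0:ℝ) < 5+((m:ℝ)-1)*μ := by nlinarith
    exact mul_pos (mul_pos (by positivity) (pow_pos hμ 3)) h5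
  have hb4 : 0 < B4 m μ := by
    have e : B4 m μ = ((m:ℝ)+1)*((m:ℝ)+2)*((m:ℝ)+3)*((m:ℝ)+4)*μ^4 := by
      simp only [B4]; ring
    rw [e]
    exact mul_pos (by positivity) (pow_pos hμ 4)
  have hz := quartic_stable (qI14 m μ) (B1 m μ) (B2 m μ) (B3 m μ) (B4 m μ)
    hb4 hb3 hb2 hb1 hb0 hD hA1 hA2 (η - 1/2) ((shiftQ m μ η).symm.trans hη)
  have : (η - 1/2).re = η.re - 1/2 := by simp
  linarith [hz, this.symm.le]

lemma PI14_cont (m : ℕ) (μ : ℝ) : Continuous (fun s : ℝ => PI14 m μ s) := by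
  simp only [PI14]; fun_prop

lemma qI14_cont (m : ℕ) : Continuous (fun x : ℝ => qI14 m x) := by
  simp only [qI14, PI14]; fun_prop

lemma qI14_zero (m : ℕ) : qI14 m 0 = 24 := by
  simp only [qI14, PI14]; norm_num

lemma PI14_one_pos (m : ℕ) (μ : ℝ) (hμ : 0 < μ) : 0 < PI14 m μ 1 := by
  have e : PI14 m μ 1 = 24 + 50*((m:ℝ)*μ) + 35*((m:ℝ)*μ)^2 + 10*((m:ℝ)*μ)^3 + ((m:ℝ)*μ)^4 := by
    simp only [PI14]; ring
  have hA : 0 ≤ (m:ℝ)*μ := mul_nonneg (Nat.cast_nonneg m) hμ.le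
  rw [e]
  nlinarith [pow_nonneg hA 2, pow_nonneg hA 3, pow_nonneg hA 4]

lemma not_stable_of_neg (m : ℕ) (μ : ℝ) (hμ : 0 < μ) (t : ℝ) (ht : 1/2 ≤ t) (ht1 : t ≤ 1)
    (hneg : PI14 m μ t < 0) :
    ∃ η : ℂ, PI14c m μ η = 0 ∧ 1/2 < η.re := by
  obtain ⟨s, hs, hfs⟩ := intermediate_value_Icc ht1 ((PI14_cont m μ).continuousOn)
    (Set.mem_Icc.mpr ⟨hneg.le, (PI14_one_pos m μ hμ).le⟩)
  have hfs' : PI14 m μ s = 0 := hfs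
  have hst : s ≠ t := by
    intro h; rw [h] at hfs'; exact absurd hfs' (ne_of_lt hneg)
  have hsgt : 1/2 < s := lt_of_le_of_lt ht (lt_of_le_of_ne hs.1 (Ne.symm hst))
  refine ⟨(s:ℂ), ?_, by simpa using hsgt⟩
  have e : PI14c m μ (s:ℂ) = ((PI14 m μ s : ℝ) : ℂ) := by
    simp only [PI14c, PI14]; push_cast; ring
  rw [e, hfs']; norm_num

lemma b0_nonneg (m : ℕ) (μm μ : ℝ) (hμ : 0 < μ) (hq : qI14 m μm = 0)
    (hmin : ∀ x : ℝ, 0 < x → qI14 m x = 0 → μm ≤ x) (hle : μ ≤ μm) : 0 ≤ qI14 m μ := by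
  rcases eq_or_lt_of_le hle with h | h
  · rw [h, hq]
  by_contra hneg
  push_neg at hneg
  obtain ⟨r, hr, hfr⟩ := intermediate_value_Icc' hμ.le ((qI14_cont m).continuousOn)
    (Set.mem_Icc.mpr ⟨hneg.le, by rw [qI14_zero]; norm_num⟩)
  have hfr' : qI14 m r = 0 := hfr
  have hr0 : 0 < r := by
    rcases eq_or_lt_of_le hr.1 with h0 | h0
    · exfalso; rw [← h0, qI14_zero] at hfr'; norm_num at hfr'
    · exact h0
  have := hmin r hr0 hfr'
  linarith [hr.2]

lemma stable_big (m : ℕ) (hm : 8 ≤ m) (μ : ℝ) (hμ : 0 < μ) :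
    ∀ η : ℂ, PI14c m μ η = 0 → η.re ≤ 1 / 2 := by
  have ha : (0:ℝ) ≤ (m:ℝ) - 8 := by
    have : (8:ℝ) ≤ (m:ℝ) := by exact_mod_cast hm
    linarith
  have hgb1 : 0 ≤ B1 m μ := by
    have e : B1 m μ = μ^1 * (450*((m:ℝ)-8)^0*μ^0 + 2205*((m:ℝ)-8)^0*μ^1 + 2655*((m:ℝ)-8)^0*μ^2 + 630*((m:ℝ)-8)^0*μ^3 + 50*((m:ℝ)-8)^1*μ^0 + 560*((m:ℝ)-8)^1*μ^1 + (2345/2)*((m:ℝ)-8)^1*μ^2 + (1013/2)*((m:ℝ)-8)^1*μ^3 + 35*((m:ℝ)-8)^2*μ^1 + 165*((m:ℝ)-8)^2*μ^2 + (259/2)*((m:ℝ)-8)^2*μ^3 + (15/2)*((m:ℝ)-8)^3*μ^2 + (27/2)*((m:ℝ)-8)^3*μ^3 + (1/2)*((m:ℝ)-8)^4*μ^3) := by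
      simp only [B1]; push_cast; ring
    rw [e]
    refine mul_nonneg (pow_nonneg hμ.le _) ?_
    repeat' apply add_nonneg
    all_goals exact mul_nonneg (mul_nonneg (by norm_num) (pow_nonneg ha _)) (pow_nonneg hμ.le _)
  have hgb2 : 0 ≤ B2 m μ := by
    have e : B2 m μ = μ^2 * (3150*((m:ℝ)-8)^0*μ^0 + 9450*((m:ℝ)-8)^0*μ^1 + 5220*((m:ℝ)-8)^0*μ^2 + 665*((m:ℝ)-8)^1*μ^0 + 3345*((m:ℝ)-8)^1*μ^1 + 2857*((m:ℝ)-8)^1*μ^2 + 35*((m:ℝ)-8)^2*μ^0 + 390*((m:ℝ)-8)^2*μ^1 + (1127/2)*((m:ℝ)-8)^2*μ^2 + 15*((m:ℝ)-8)^3*μ^1 + 48*((m:ℝ)-8)^3*μ^2 + (3/2)*((m:ℝ)-8)^4*μ^2) := by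
      simp only [B2]; push_cast; ring
    rw [e]
    refine mul_nonneg (pow_nonneg hμ.le _) ?_
    repeat' apply add_nonneg
    all_goals exact mul_nonneg (mul_nonneg (by norm_num) (pow_nonneg ha _)) (pow_nonneg hμ.le _)
  have hgb0 : 0 ≤ qI14 m μ := by
    have e : qI14 m μ = 24*((m:ℝ)-8)^0*μ^0 + 175*((m:ℝ)-8)^0*μ^1 + 350*((m:ℝ)-8)^0*μ^2 + (385/2)*((m:ℝ)-8)^0*μ^3 + 1*((m:ℝ)-8)^0*μ^4 + 25*((m:ℝ)-8)^1*μ^1 + (455/4)*((m:ℝ)-8)^1*μ^2 + (495/4)*((m:ℝ)-8)^1*μ^3 + (189/8)*((m:ℝ)-8)^1*μ^4 + (35/4)*((m:ℝ)-8)^2*μ^2 + (45/2)*((m:ℝ)-8)^2*μ^3 + (159/16)*((m:ℝ)-8)^2*μ^4 + (5/4)*((m:ℝ)-8)^3*μ^3 + (11/8)*((m:ℝ)-8)^3*μ^4 + (1/16)*((m:ℝ)-8)^4*μ^4 := by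
      simp only [qI14, PI14]; push_cast; ring
    rw [e]
    repeat' apply add_nonneg
    all_goals exact mul_nonneg (mul_nonneg (by norm_num) (pow_nonneg ha _)) (pow_nonneg hμ.le _)
  have hgD : 0 ≤ B1 m μ * B2 m μ * B3 m μ - (B1 m μ)^2 * B4 m μ - qI14 m μ * (B3 m μ)^2 := by
    have e : B1 m μ * B2 m μ * B3 m μ - (B1 m μ)^2 * B4 m μ - qI14 m μ * (B3 m μ)^2 = μ^6 * (9275310000*((m:ℝ)-8)^0*μ^0 + 83195343000*((m:ℝ)-8)^0*μ^1 + 294460887600*((m:ℝ)-8)^0*μ^2 + 524893446000*((m:ℝ)-8)^0*μ^3 + 494014950000*((m:ℝ)-8)^0*μ^4 + 230164011000*((m:ℝ)-8)^0*μ^5 + 40672724400*((m:ℝ)-8)^0*μ^6 + 5877657000*((m:ℝ)-8)^1*μ^0 + 64691598600*((m:ℝ)-8)^1*μ^1 + 273402578070*((m:ℝ)-8)^1*μ^2 + 571127556600*((m:ℝ)-8)^1*μ^3 + 622158174900*((m:ℝ)-8)^1*μ^4 + 333321134400*((m:ℝ)-8)^1*μ^5 + 67761150030*((m:ℝ)-8)^1*μ^6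 + 1549752600*((m:ℝ)-8)^2*μ^0 + 21489191330*((m:ℝ)-8)^2*μ^1 + 110555907291*((m:ℝ)-8)^2*μ^2 + 274558749700*((m:ℝ)-8)^2*μ^3 + 349848946090*((m:ℝ)-8)^2*μ^4 + 217054397130*((m:ℝ)-8)^2*μ^5 + 50911878419*((m:ℝ)-8)^2*μ^6 + 217622000*((m:ℝ)-8)^3*μ^0 + 3953433890*((m:ℝ)-8)^3*μ^1 + 25435939106*((m:ℝ)-8)^3*μ^2 + 76566387350*((m:ℝ)-8)^3*μ^3 + 115743792610*((m:ℝ)-8)^3*μ^4 + 83991478480*((m:ℝ)-8)^3*μ^5 + 22865164076*((m:ℝ)-8)^3*μ^6 + 17164800*((m:ℝ)-8)^4*μ^0 + 435092740*((m:ℝ)-8)^4*μ^1 + 3642535807*((m:ℝ)-8)^4*μ^2 + 13654578450*((m:ℝ)-8)^4*μ^3 + 24962949380*((m:ℝ)-8)^4*μ^4 + 21479695310*((m:ℝ)-8)^4*μ^5 + 6848726901*((m:ℝ)-8)^4*μ^6 + 721000*((m:ℝ)-8)^5*μ^0 + 28647220*((m:ℝ)-8)^5*μ^1 + 332525578*((m:ℝ)-8)^5*μ^2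 + 1615363900*((m:ℝ)-8)^5*μ^3 + 3668972690*((m:ℝ)-8)^5*μ^4 + 3814786570*((m:ℝ)-8)^5*μ^5 + 1443324560*((m:ℝ)-8)^5*μ^6 + 12600*((m:ℝ)-8)^6*μ^0 + 1044930*((m:ℝ)-8)^6*μ^1 + 18900673*((m:ℝ)-8)^6*μ^2 + 126800000*((m:ℝ)-8)^6*μ^3 + 372310140*((m:ℝ)-8)^6*μ^4 + 480410290*((m:ℝ)-8)^6*μ^5 + 219688582*((m:ℝ)-8)^6*μ^6 + 16290*((m:ℝ)-8)^7*μ^1 + 611646*((m:ℝ)-8)^7*μ^2 + 6369750*((m:ℝ)-8)^7*μ^3 + 25764790*((m:ℝ)-8)^7*μ^4 + 42922650*((m:ℝ)-8)^7*μ^5 + 24356228*((m:ℝ)-8)^7*μ^6 + 8629*((m:ℝ)-8)^8*μ^2 + 185850*((m:ℝ)-8)^8*μ^3 + 1164020*((m:ℝ)-8)^8*μ^4 + 2667570*((m:ℝ)-8)^8*μ^5 + 1953498*((m:ℝ)-8)^8*μ^6 + 2400*((m:ℝ)-8)^9*μ^3 + 31010*((m:ℝ)-8)^9*μ^4 + 109870*((m:ℝ)-8)^9*μ^5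 + 110610*((m:ℝ)-8)^9*μ^6 + 370*((m:ℝ)-8)^10*μ^4 + 2700*((m:ℝ)-8)^10*μ^5 + 4199*((m:ℝ)-8)^10*μ^6 + 30*((m:ℝ)-8)^11*μ^5 + 96*((m:ℝ)-8)^11*μ^6 + 1*((m:ℝ)-8)^12*μ^6) := by
      simp only [B1, B2, B3, B4, qI14, PI14]; push_cast; ring
    rw [e]
    refine mul_nonneg (pow_nonneg hμ.le _) ?_
    repeat' apply add_nonneg
    all_goals exact mul_nonneg (mul_nonneg (by norm_num) (pow_nonneg ha _)) (pow_nonneg hμ.le _)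
  have hgA1 : 0 ≤ 2*(B2 m μ)^2*(B3 m μ) + 2*(B1 m μ)*(B3 m μ)^2 - 8*(qI14 m μ)*(B3 m μ)*(B4 m μ) := by
    have e : 2*(B2 m μ)^2*(B3 m μ) + 2*(B1 m μ)*(B3 m μ)^2 - 8*(qI14 m μ)*(B3 m μ)*(B4 m μ) = μ^7 * (262092996000*((m:ℝ)-8)^0*μ^0 + 1936783094400*((m:ℝ)-8)^0*μ^1 + 5413359600000*((m:ℝ)-8)^0*μ^2 + 7126196616000*((m:ℝ)-8)^0*μ^3 + 4385633868000*((m:ℝ)-8)^0*μ^4 + 996053889600*((m:ℝ)-8)^0*μ^5 + 189849517200*((m:ℝ)-8)^1*μ^0 + 1680445403280*((m:ℝ)-8)^1*μ^1 + 5513847120000*((m:ℝ)-8)^1*μ^2 + 8402432875200*((m:ℝ)-8)^1*μ^3 + 5932925103600*((m:ℝ)-8)^1*μ^4 + 1540578175920*((m:ℝ)-8)^1*μ^5 + 58875901560*((m:ℝ)-8)^2*μ^0 + 636116274624*((m:ℝ)-8)^2*μ^1 + 2485514496000*((m:ℝ)-8)^2*μ^2 + 4432279948560*((m:ℝ)-8)^2*μ^3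 + 3619160704680*((m:ℝ)-8)^2*μ^4 + 1079678545296*((m:ℝ)-8)^2*μ^5 + 10133090780*((m:ℝ)-8)^3*μ^0 + 137232816404*((m:ℝ)-8)^3*μ^1 + 650964324000*((m:ℝ)-8)^3*μ^2 + 1377986213920*((m:ℝ)-8)^3*μ^3 + 1315006045300*((m:ℝ)-8)^3*μ^4 + 453963319740*((m:ℝ)-8)^3*μ^5 + 1045308680*((m:ℝ)-8)^4*μ^0 + 18456832308*((m:ℝ)-8)^4*μ^1 + 109186458600*((m:ℝ)-8)^4*μ^2 + 279720661520*((m:ℝ)-8)^4*μ^3 + 316403931400*((m:ℝ)-8)^4*μ^4 + 127675728148*((m:ℝ)-8)^4*μ^5 + 64631440*((m:ℝ)-8)^5*μ^0 + 1584815752*((m:ℝ)-8)^5*μ^1 + 12165458000*((m:ℝ)-8)^5*μ^2 + 38750197040*((m:ℝ)-8)^5*μ^3 + 52961099220*((m:ℝ)-8)^5*μ^4 + 25325896764*((m:ℝ)-8)^5*μ^5 + 2217760*((m:ℝ)-8)^6*μ^0 + 84852152*((m:ℝ)-8)^6*μ^1 + 900555200*((m:ℝ)-8)^6*μ^2 +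 3711119040*((m:ℝ)-8)^6*μ^3 + 6295549800*((m:ℝ)-8)^6*μ^4 + 3635712628*((m:ℝ)-8)^6*μ^5 + 32580*((m:ℝ)-8)^7*μ^0 + 2590164*((m:ℝ)-8)^7*μ^1 + 42715600*((m:ℝ)-8)^7*μ^2 + 242676160*((m:ℝ)-8)^7*μ^3 + 531659360*((m:ℝ)-8)^7*μ^4 + 380822384*((m:ℝ)-8)^7*μ^5 + 34516*((m:ℝ)-8)^8*μ^1 + 1178200*((m:ℝ)-8)^8*μ^2 + 10371920*((m:ℝ)-8)^8*μ^3 + 31269680*((m:ℝ)-8)^8*μ^4 + 28900488*((m:ℝ)-8)^8*μ^5 + 14400*((m:ℝ)-8)^9*μ^2 + 261680*((m:ℝ)-8)^9*μ^3 + 1220220*((m:ℝ)-8)^9*μ^4 + 1550380*((m:ℝ)-8)^9*μ^5 + 2960*((m:ℝ)-8)^10*μ^3 + 28440*((m:ℝ)-8)^10*μ^4 + 55828*((m:ℝ)-8)^10*μ^5 + 300*((m:ℝ)-8)^11*μ^4 + 1212*((m:ℝ)-8)^11*μ^5 + 12*((m:ℝ)-8)^12*μ^5) := by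
      simp only [B1, B2, B3, B4, qI14, PI14]; push_cast; ring
    rw [e]
    refine mul_nonneg (pow_nonneg hμ.le _) ?_
    repeat' apply add_nonneg
    all_goals exact mul_nonneg (mul_nonneg (by norm_num) (pow_nonneg ha _)) (pow_nonneg hμ.le _)
  have hgA2 : 0 ≤ 8*(B2 m μ)*(B3 m μ)^2 + 4*(B2 m μ)^2*(B4 m μ) + 4*(B1 m μ)*(B3 m μ)*(B4 m μ) - 16*(qI14 m μ)*(B4 m μ)^2 := by
    have e : 8*(B2 m μ)*(B3 m μ)^2 + 4*(B2 m μ)^2*(B4 m μ) + 4*(B1 m μ)*(B3 m μ)*(B4 m μ) - 16*(qI14 m μ)*(B4 m μ)^2 = μ^8 * (3098875190400*((m:ℝ)-8)^0*μ^0 + 18092788560000*((m:ℝ)-8)^0*μ^1 + 37397921616000*((m:ℝ)-8)^0*μ^2 + 32281414704000*((m:ℝ)-8)^0*μ^3 + 9729600249600*((m:ℝ)-8)^0*μ^4 + 2521361040480*((m:ℝ)-8)^1*μ^0 + 17306950212000*((m:ℝ)-8)^1*μ^1 + 41426678167200*((m:ℝ)-8)^1*μ^2 + 40977737416800*((m:ℝ)-8)^1*μ^3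 + 14067664139520*((m:ℝ)-8)^1*μ^4 + 896648027184*((m:ℝ)-8)^2*μ^0 + 7339122165600*((m:ℝ)-8)^2*μ^1 + 20567023896960*((m:ℝ)-8)^2*μ^2 + 23508452190240*((m:ℝ)-8)^2*μ^3 + 9246883073616*((m:ℝ)-8)^2*μ^4 + 182031690184*((m:ℝ)-8)^3*μ^0 + 1811027521000*((m:ℝ)-8)^3*μ^1 + 6027923856840*((m:ℝ)-8)^3*μ^2 + 8048867798360*((m:ℝ)-8)^3*μ^3 + 3656578184336*((m:ℝ)-8)^3*μ^4 + 23074186988*((m:ℝ)-8)^4*μ^0 + 286619045800*((m:ℝ)-8)^4*μ^1 + 1155240782320*((m:ℝ)-8)^4*μ^2 + 1828072900280*((m:ℝ)-8)^4*μ^3 + 969437687892*((m:ℝ)-8)^4*μ^4 + 1870073192*((m:ℝ)-8)^5*μ^0 + 30172944400*((m:ℝ)-8)^5*μ^1 + 151300268560*((m:ℝ)-8)^5*μ^2 + 289284535040*((m:ℝ)-8)^5*μ^3 + 181632669888*((m:ℝ)-8)^5*μ^4 + 94632912*((m:ℝ)-8)^6*μ^0 + 2112994000*((m:ℝ)-8)^6*μ^1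 + 13716236960*((m:ℝ)-8)^6*μ^2 + 32555391440*((m:ℝ)-8)^6*μ^3 + 24670777588*((m:ℝ)-8)^6*μ^4 + 2733744*((m:ℝ)-8)^7*μ^0 + 94925800*((m:ℝ)-8)^7*μ^1 + 850017560*((m:ℝ)-8)^7*μ^2 + 2606104040*((m:ℝ)-8)^7*μ^3 + 2448700096*((m:ℝ)-8)^7*μ^4 + 34516*((m:ℝ)-8)^8*μ^0 + 2482600*((m:ℝ)-8)^8*μ^1 + 34466880*((m:ℝ)-8)^8*μ^2 + 145462520*((m:ℝ)-8)^8*μ^3 + 176327504*((m:ℝ)-8)^8*μ^4 + 28800*((m:ℝ)-8)^9*μ^1 + 825840*((m:ℝ)-8)^9*μ^2 + 5392560*((m:ℝ)-8)^9*μ^3 + 8986200*((m:ℝ)-8)^9*μ^4 + 8880*((m:ℝ)-8)^10*μ^2 + 119520*((m:ℝ)-8)^10*μ^3 + 307740*((m:ℝ)-8)^10*μ^4 + 1200*((m:ℝ)-8)^11*μ^3 + 6360*((m:ℝ)-8)^11*μ^4 + 60*((m:ℝ)-8)^12*μ^4) := by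
      simp only [B1, B2, B3, B4, qI14, PI14]; push_cast; ring
    rw [e]
    refine mul_nonneg (pow_nonneg hμ.le _) ?_
    repeat' apply add_nonneg
    all_goals exact mul_nonneg (mul_nonneg (by norm_num) (pow_nonneg ha _)) (pow_nonneg hμ.le _)
  exact stable_of m μ (by omega) hμ hgb1 hgb2 hgb0 hgD hgA1 hgA2

lemma stab1 (μ : ℝ) (hμ : 0 < μ) (hU : μ ≤ 13/10) (hb0 : 0 ≤ qI14 1 μ) :
    ∀ η : ℂ, PI14c 1 μ η = 0 → η.re ≤ 1 / 2 := by
  apply stable_of 1 μ (by norm_num) hμ ?_ ?_ hb0 ?_ ?_ ?_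
  · have e : B1 1 μ = μ^1 * (100 + -40*μ^2) := by
      simp only [B1]; push_cast; ring
    rw [e]
    refine mul_nonneg (pow_nonneg hμ.le _) ?_
    have hs2 : μ^2 ≤ (13/10)*μ^1 := by
      nlinarith [mul_nonneg (sub_nonneg.mpr hU) (pow_nonneg hμ.le 1)]
    have hs3 : μ^3 ≤ (13/10)*μ^2 := by
      nlinarith [mul_nonneg (sub_nonneg.mpr hU) (pow_nonneg hμ.le 2)]
    linarith [hμ.le, hU, hs2, pow_nonneg hμ.le 2, hs3, pow_nonneg hμ.le 3]
  · have e : B2 1 μ = μ^2 * (210 + -30*μ^2) := by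
      simp only [B2]; push_cast; ring
    rw [e]
    refine mul_nonneg (pow_nonneg hμ.le _) ?_
    have hs2 : μ^2 ≤ (13/10)*μ^1 := by
      nlinarith [mul_nonneg (sub_nonneg.mpr hU) (pow_nonneg hμ.le 1)]
    linarith [hμ.le, hU, hs2, pow_nonneg hμ.le 2]
  · have e : B1 1 μ * B2 1 μ * B3 1 μ - (B1 1 μ)^2 * B4 1 μ - qI14 1 μ * (B3 1 μ)^2 = μ^6 * (2457600 + -768000*μ^2 + 38400*μ^4) := by
      simp only [B1, B2, B3, B4, qI14, PI14]; push_cast; ring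
    rw [e]
    refine mul_nonneg (pow_nonneg hμ.le _) ?_
    have hs2 : μ^2 ≤ (13/10)*μ^1 := by
      nlinarith [mul_nonneg (sub_nonneg.mpr hU) (pow_nonneg hμ.le 1)]
    have hs3 : μ^3 ≤ (13/10)*μ^2 := by
      nlinarith [mul_nonneg (sub_nonneg.mpr hU) (pow_nonneg hμ.le 2)]
    have hs4 : μ^4 ≤ (13/10)*μ^3 := by
      nlinarith [mul_nonneg (sub_nonneg.mpr hU) (pow_nonneg hμ.le 3)]
    have hs5 : μ^5 ≤ (13/10)*μ^4 := by
      nlinarith [mul_nonneg (sub_nonneg.mpr hU) (pow_nonneg hμ.le 4)]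
    have hs6 : μ^6 ≤ (13/10)*μ^5 := by
      nlinarith [mul_nonneg (sub_nonneg.mpr hU) (pow_nonneg hμ.le 5)]
    linarith [hμ.le, hU, hs2, pow_nonneg hμ.le 2, hs3, pow_nonneg hμ.le 3, hs4, pow_nonneg hμ.le 4, hs5, pow_nonneg hμ.le 5, hs6, pow_nonneg hμ.le 6]
  · have e : 2*(B2 1 μ)^2*(B3 1 μ) + 2*(B1 1 μ)*(B3 1 μ)^2 - 8*(qI14 1 μ)*(B3 1 μ)*(B4 1 μ) = μ^7 * (27158400 + -6624000*μ^2 + 201600*μ^4) := by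
      simp only [B1, B2, B3, B4, qI14, PI14]; push_cast; ring
    rw [e]
    refine mul_nonneg (pow_nonneg hμ.le _) ?_
    have hs2 : μ^2 ≤ (13/10)*μ^1 := by
      nlinarith [mul_nonneg (sub_nonneg.mpr hU) (pow_nonneg hμ.le 1)]
    have hs3 : μ^3 ≤ (13/10)*μ^2 := by
      nlinarith [mul_nonneg (sub_nonneg.mpr hU) (pow_nonneg hμ.le 2)]
    have hs4 : μ^4 ≤ (13/10)*μ^3 := by
      nlinarith [mul_nonneg (sub_nonneg.mpr hU) (pow_nonneg hμ.le 3)]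
    have hs5 : μ^5 ≤ (13/10)*μ^4 := by
      nlinarith [mul_nonneg (sub_nonneg.mpr hU) (pow_nonneg hμ.le 4)]
    linarith [hμ.le, hU, hs2, pow_nonneg hμ.le 2, hs3, pow_nonneg hμ.le 3, hs4, pow_nonneg hμ.le 4, hs5, pow_nonneg hμ.le 5]
  · have e : 8*(B2 1 μ)*(B3 1 μ)^2 + 4*(B2 1 μ)^2*(B4 1 μ) + 4*(B1 1 μ)*(B3 1 μ)*(B4 1 μ) - 16*(qI14 1 μ)*(B4 1 μ)^2 = μ^8 * (123926400 + -20448000*μ^2 + 201600*μ^4) := by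
      simp only [B1, B2, B3, B4, qI14, PI14]; push_cast; ring
    rw [e]
    refine mul_nonneg (pow_nonneg hμ.le _) ?_
    have hs2 : μ^2 ≤ (13/10)*μ^1 := by
      nlinarith [mul_nonneg (sub_nonneg.mpr hU) (pow_nonneg hμ.le 1)]
    have hs3 : μ^3 ≤ (13/10)*μ^2 := by
      nlinarith [mul_nonneg (sub_nonneg.mpr hU) (pow_nonneg hμ.le 2)]
    have hs4 : μ^4 ≤ (13/10)*μ^3 := by
      nlinarith [mul_nonneg (sub_nonneg.mpr hU) (pow_nonneg hμ.le 3)]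
    linarith [hμ.le, hU, hs2, pow_nonneg hμ.le 2, hs3, pow_nonneg hμ.le 3, hs4, pow_nonneg hμ.le 4]

lemma stab2 (μ : ℝ) (hμ : 0 < μ) (hU : μ ≤ 3/2) (hb0 : 0 ≤ qI14 2 μ) :
    ∀ η : ℂ, PI14c 2 μ η = 0 → η.re ≤ 1 / 2 := by
  apply stable_of 2 μ (by norm_num) hμ ?_ ?_ hb0 ?_ ?_ ?_
  · have e : B1 2 μ = μ^1 * (150 + 105*μ^1 + -60*μ^2 + -15*μ^3) := by
      simp only [B1]; push_cast; ring
    rw [e]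
    refine mul_nonneg (pow_nonneg hμ.le _) ?_
    have hs2 : μ^2 ≤ (3/2)*μ^1 := by
      nlinarith [mul_nonneg (sub_nonneg.mpr hU) (pow_nonneg hμ.le 1)]
    have hs3 : μ^3 ≤ (3/2)*μ^2 := by
      nlinarith [mul_nonneg (sub_nonneg.mpr hU) (pow_nonneg hμ.le 2)]
    linarith [hμ.le, hU, hs2, pow_nonneg hμ.le 2, hs3, pow_nonneg hμ.le 3]
  · have e : B2 2 μ = μ^2 * (420 + 180*μ^1 + -60*μ^2) := by
      simp only [B2]; push_cast; ring
    rw [e]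
    refine mul_nonneg (pow_nonneg hμ.le _) ?_
    have hs2 : μ^2 ≤ (3/2)*μ^1 := by
      nlinarith [mul_nonneg (sub_nonneg.mpr hU) (pow_nonneg hμ.le 1)]
    linarith [hμ.le, hU, hs2, pow_nonneg hμ.le 2]
  · have e : B1 2 μ * B2 2 μ * B3 2 μ - (B1 2 μ)^2 * B4 2 μ - qI14 2 μ * (B3 2 μ)^2 = μ^6 * (21060000 + 26424000*μ^1 + 4217400*μ^2 + -3960000*μ^3 + -1098000*μ^4 + 12600*μ^6) := by
      simp only [B1, B2, B3, B4, qI14, PI14]; push_cast; ring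
    rw [e]
    refine mul_nonneg (pow_nonneg hμ.le _) ?_
    have hs2 : μ^2 ≤ (3/2)*μ^1 := by
      nlinarith [mul_nonneg (sub_nonneg.mpr hU) (pow_nonneg hμ.le 1)]
    have hs3 : μ^3 ≤ (3/2)*μ^2 := by
      nlinarith [mul_nonneg (sub_nonneg.mpr hU) (pow_nonneg hμ.le 2)]
    have hs4 : μ^4 ≤ (3/2)*μ^3 := by
      nlinarith [mul_nonneg (sub_nonneg.mpr hU) (pow_nonneg hμ.le 3)]
    have hs5 : μ^5 ≤ (3/2)*μ^4 := by
      nlinarith [mul_nonneg (sub_nonneg.mpr hU) (pow_nonneg hμ.le 4)]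
    have hs6 : μ^6 ≤ (3/2)*μ^5 := by
      nlinarith [mul_nonneg (sub_nonneg.mpr hU) (pow_nonneg hμ.le 5)]
    linarith [hμ.le, hU, hs2, pow_nonneg hμ.le 2, hs3, pow_nonneg hμ.le 3, hs4, pow_nonneg hμ.le 4, hs5, pow_nonneg hμ.le 5, hs6, pow_nonneg hμ.le 6]
  · have e : 2*(B2 2 μ)^2*(B3 2 μ) + 2*(B1 2 μ)*(B3 2 μ)^2 - 8*(qI14 2 μ)*(B3 2 μ)*(B4 2 μ) = μ^7 * (278208000 + 291081600*μ^1 + 27648000*μ^2 + -31968000*μ^3 + -5184000*μ^4 + 86400*μ^5) := by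
      simp only [B1, B2, B3, B4, qI14, PI14]; push_cast; ring
    rw [e]
    refine mul_nonneg (pow_nonneg hμ.le _) ?_
    have hs2 : μ^2 ≤ (3/2)*μ^1 := by
      nlinarith [mul_nonneg (sub_nonneg.mpr hU) (pow_nonneg hμ.le 1)]
    have hs3 : μ^3 ≤ (3/2)*μ^2 := by
      nlinarith [mul_nonneg (sub_nonneg.mpr hU) (pow_nonneg hμ.le 2)]
    have hs4 : μ^4 ≤ (3/2)*μ^3 := by
      nlinarith [mul_nonneg (sub_nonneg.mpr hU) (pow_nonneg hμ.le 3)]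
    have hs5 : μ^5 ≤ (3/2)*μ^4 := by
      nlinarith [mul_nonneg (sub_nonneg.mpr hU) (pow_nonneg hμ.le 4)]
    linarith [hμ.le, hU, hs2, pow_nonneg hμ.le 2, hs3, pow_nonneg hμ.le 3, hs4, pow_nonneg hμ.le 4, hs5, pow_nonneg hμ.le 5]
  · have e : 8*(B2 2 μ)*(B3 2 μ)^2 + 4*(B2 2 μ)^2*(B4 2 μ) + 4*(B1 2 μ)*(B3 2 μ)*(B4 2 μ) - 16*(qI14 2 μ)*(B4 2 μ)^2 = μ^8 * (1543449600 + 1284768000*μ^1 + 59616000*μ^2 + -82080000*μ^3 + -6393600*μ^4) := by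
      simp only [B1, B2, B3, B4, qI14, PI14]; push_cast; ring
    rw [e]
    refine mul_nonneg (pow_nonneg hμ.le _) ?_
    have hs2 : μ^2 ≤ (3/2)*μ^1 := by
      nlinarith [mul_nonneg (sub_nonneg.mpr hU) (pow_nonneg hμ.le 1)]
    have hs3 : μ^3 ≤ (3/2)*μ^2 := by
      nlinarith [mul_nonneg (sub_nonneg.mpr hU) (pow_nonneg hμ.le 2)]
    have hs4 : μ^4 ≤ (3/2)*μ^3 := by
      nlinarith [mul_nonneg (sub_nonneg.mpr hU) (pow_nonneg hμ.le 3)]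
    linarith [hμ.le, hU, hs2, pow_nonneg hμ.le 2, hs3, pow_nonneg hμ.le 3, hs4, pow_nonneg hμ.le 4]

lemma stab3 (μ : ℝ) (hμ : 0 < μ) (hU : μ ≤ 7/4) (hb0 : 0 ≤ qI14 3 μ) :
    ∀ η : ℂ, PI14c 3 μ η = 0 → η.re ≤ 1 / 2 := by
  apply stable_of 3 μ (by norm_num) hμ ?_ ?_ hb0 ?_ ?_ ?_
  · have e : B1 3 μ = μ^1 * (200 + 280*μ^1 + -20*μ^2 + -40*μ^3) := by
      simp only [B1]; push_cast; ring
    rw [e]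
    refine mul_nonneg (pow_nonneg hμ.le _) ?_
    have hs2 : μ^2 ≤ (7/4)*μ^1 := by
      nlinarith [mul_nonneg (sub_nonneg.mpr hU) (pow_nonneg hμ.le 1)]
    have hs3 : μ^3 ≤ (7/4)*μ^2 := by
      nlinarith [mul_nonneg (sub_nonneg.mpr hU) (pow_nonneg hμ.le 2)]
    linarith [hμ.le, hU, hs2, pow_nonneg hμ.le 2, hs3, pow_nonneg hμ.le 3]
  · have e : B2 3 μ = μ^2 * (700 + 600*μ^1 + -40*μ^2) := by
      simp only [B2]; push_cast; ring
    rw [e]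
    refine mul_nonneg (pow_nonneg hμ.le _) ?_
    have hs2 : μ^2 ≤ (7/4)*μ^1 := by
      nlinarith [mul_nonneg (sub_nonneg.mpr hU) (pow_nonneg hμ.le 1)]
    linarith [hμ.le, hU, hs2, pow_nonneg hμ.le 2]
  · have e : B1 3 μ * B2 3 μ * B3 3 μ - (B1 3 μ)^2 * B4 3 μ - qI14 3 μ * (B3 3 μ)^2 = μ^6 * (99840000 + 252672000*μ^1 + 204614400*μ^2 + 48768000*μ^3 + -8736000*μ^4 + -4224000*μ^5 + -230400*μ^6) := by
      simp only [B1, B2, B3, B4, qI14, PI14]; push_cast; ring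
    rw [e]
    refine mul_nonneg (pow_nonneg hμ.le _) ?_
    have hs2 : μ^2 ≤ (7/4)*μ^1 := by
      nlinarith [mul_nonneg (sub_nonneg.mpr hU) (pow_nonneg hμ.le 1)]
    have hs3 : μ^3 ≤ (7/4)*μ^2 := by
      nlinarith [mul_nonneg (sub_nonneg.mpr hU) (pow_nonneg hμ.le 2)]
    have hs4 : μ^4 ≤ (7/4)*μ^3 := by
      nlinarith [mul_nonneg (sub_nonneg.mpr hU) (pow_nonneg hμ.le 3)]
    have hs5 : μ^5 ≤ (7/4)*μ^4 := by
      nlinarith [mul_nonneg (sub_nonneg.mpr hU) (pow_nonneg hμ.le 4)]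
    have hs6 : μ^6 ≤ (7/4)*μ^5 := by
      nlinarith [mul_nonneg (sub_nonneg.mpr hU) (pow_nonneg hμ.le 5)]
    linarith [hμ.le, hU, hs2, pow_nonneg hμ.le 2, hs3, pow_nonneg hμ.le 3, hs4, pow_nonneg hμ.le 4, hs5, pow_nonneg hμ.le 5, hs6, pow_nonneg hμ.le 6]
  · have e : 2*(B2 3 μ)^2*(B3 3 μ) + 2*(B1 3 μ)*(B3 3 μ)^2 - 8*(qI14 3 μ)*(B3 3 μ)*(B4 3 μ) = μ^7 * (1558464000 + 3272985600*μ^1 + 2054400000*μ^2 + 305664000*μ^3 + -67008000*μ^4 + -12057600*μ^5) := by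
      simp only [B1, B2, B3, B4, qI14, PI14]; push_cast; ring
    rw [e]
    refine mul_nonneg (pow_nonneg hμ.le _) ?_
    have hs2 : μ^2 ≤ (7/4)*μ^1 := by
      nlinarith [mul_nonneg (sub_nonneg.mpr hU) (pow_nonneg hμ.le 1)]
    have hs3 : μ^3 ≤ (7/4)*μ^2 := by
      nlinarith [mul_nonneg (sub_nonneg.mpr hU) (pow_nonneg hμ.le 2)]
    have hs4 : μ^4 ≤ (7/4)*μ^3 := by
      nlinarith [mul_nonneg (sub_nonneg.mpr hU) (pow_nonneg hμ.le 3)]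
    have hs5 : μ^5 ≤ (7/4)*μ^4 := by
      nlinarith [mul_nonneg (sub_nonneg.mpr hU) (pow_nonneg hμ.le 4)]
    linarith [hμ.le, hU, hs2, pow_nonneg hμ.le 2, hs3, pow_nonneg hμ.le 3, hs4, pow_nonneg hμ.le 4, hs5, pow_nonneg hμ.le 5]
  · have e : 8*(B2 3 μ)*(B3 3 μ)^2 + 4*(B2 3 μ)^2*(B4 3 μ) + 4*(B1 3 μ)*(B3 3 μ)*(B4 3 μ) - 16*(qI14 3 μ)*(B4 3 μ)^2 = μ^8 * (10245849600 + 17072640000*μ^1 + 7751424000*μ^2 + 608256000*μ^3 + -115929600*μ^4) := by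
      simp only [B1, B2, B3, B4, qI14, PI14]; push_cast; ring
    rw [e]
    refine mul_nonneg (pow_nonneg hμ.le _) ?_
    have hs2 : μ^2 ≤ (7/4)*μ^1 := by
      nlinarith [mul_nonneg (sub_nonneg.mpr hU) (pow_nonneg hμ.le 1)]
    have hs3 : μ^3 ≤ (7/4)*μ^2 := by
      nlinarith [mul_nonneg (sub_nonneg.mpr hU) (pow_nonneg hμ.le 2)]
    have hs4 : μ^4 ≤ (7/4)*μ^3 := by
      nlinarith [mul_nonneg (sub_nonneg.mpr hU) (pow_nonneg hμ.le 3)]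
    linarith [hμ.le, hU, hs2, pow_nonneg hμ.le 2, hs3, pow_nonneg hμ.le 3, hs4, pow_nonneg hμ.le 4]

lemma stab4 (μ : ℝ) (hμ : 0 < μ) (hU : μ ≤ 11/5) (hb0 : 0 ≤ qI14 4 μ) :
    ∀ η : ℂ, PI14c 4 μ η = 0 → η.re ≤ 1 / 2 := by
  apply stable_of 4 μ (by norm_num) hμ ?_ ?_ hb0 ?_ ?_ ?_
  · have e : B1 4 μ = μ^1 * (250 + 525*μ^1 + 125*μ^2 + -60*μ^3) := by
      simp only [B1]; push_cast; ring
    rw [e]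
    refine mul_nonneg (pow_nonneg hμ.le _) ?_
    have hs2 : μ^2 ≤ (11/5)*μ^1 := by
      nlinarith [mul_nonneg (sub_nonneg.mpr hU) (pow_nonneg hμ.le 1)]
    have hs3 : μ^3 ≤ (11/5)*μ^2 := by
      nlinarith [mul_nonneg (sub_nonneg.mpr hU) (pow_nonneg hμ.le 2)]
    linarith [hμ.le, hU, hs2, pow_nonneg hμ.le 2, hs3, pow_nonneg hμ.le 3]
  · have e : B2 4 μ = μ^2 * (1050 + 1350*μ^1 + 120*μ^2) := by
      simp only [B2]; push_cast; ring
    rw [e]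
    refine mul_nonneg (pow_nonneg hμ.le _) ?_
    have hs2 : μ^2 ≤ (11/5)*μ^1 := by
      nlinarith [mul_nonneg (sub_nonneg.mpr hU) (pow_nonneg hμ.le 1)]
    linarith [hμ.le, hU, hs2, pow_nonneg hμ.le 2]
  · have e : B1 4 μ * B2 4 μ * B3 4 μ - (B1 4 μ)^2 * B4 4 μ - qI14 4 μ * (B3 4 μ)^2 = μ^6 * (340410000 + 1298367000*μ^1 + 1789422600*μ^2 + 1075410000*μ^3 + 245784000*μ^4 + -2961000*μ^5 + -4800600*μ^6) := by
      simp only [B1, B2, B3, B4, qI14, PI14]; push_cast; ring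
    rw [e]
    refine mul_nonneg (pow_nonneg hμ.le _) ?_
    have hs2 : μ^2 ≤ (11/5)*μ^1 := by
      nlinarith [mul_nonneg (sub_nonneg.mpr hU) (pow_nonneg hμ.le 1)]
    have hs3 : μ^3 ≤ (11/5)*μ^2 := by
      nlinarith [mul_nonneg (sub_nonneg.mpr hU) (pow_nonneg hμ.le 2)]
    have hs4 : μ^4 ≤ (11/5)*μ^3 := by
      nlinarith [mul_nonneg (sub_nonneg.mpr hU) (pow_nonneg hμ.le 3)]
    have hs5 : μ^5 ≤ (11/5)*μ^4 := by
      nlinarith [mul_nonneg (sub_nonneg.mpr hU) (pow_nonneg hμ.le 4)]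
    have hs6 : μ^6 ≤ (11/5)*μ^5 := by
      nlinarith [mul_nonneg (sub_nonneg.mpr hU) (pow_nonneg hμ.le 5)]
    linarith [hμ.le, hU, hs2, pow_nonneg hμ.le 2, hs3, pow_nonneg hμ.le 3, hs4, pow_nonneg hμ.le 4, hs5, pow_nonneg hμ.le 5, hs6, pow_nonneg hμ.le 6]
  · have e : 2*(B2 4 μ)^2*(B3 4 μ) + 2*(B1 4 μ)*(B3 4 μ)^2 - 8*(qI14 4 μ)*(B3 4 μ)*(B4 4 μ) = μ^7 * (6158124000 + 19438574400*μ^1 + 21052080000*μ^2 + 9091656000*μ^3 + 1203300000*μ^4 + -44150400*μ^5) := by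
      simp only [B1, B2, B3, B4, qI14, PI14]; push_cast; ring
    rw [e]
    refine mul_nonneg (pow_nonneg hμ.le _) ?_
    have hs2 : μ^2 ≤ (11/5)*μ^1 := by
      nlinarith [mul_nonneg (sub_nonneg.mpr hU) (pow_nonneg hμ.le 1)]
    have hs3 : μ^3 ≤ (11/5)*μ^2 := by
      nlinarith [mul_nonneg (sub_nonneg.mpr hU) (pow_nonneg hμ.le 2)]
    have hs4 : μ^4 ≤ (11/5)*μ^3 := by
      nlinarith [mul_nonneg (sub_nonneg.mpr hU) (pow_nonneg hμ.le 3)]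
    have hs5 : μ^5 ≤ (11/5)*μ^4 := by
      nlinarith [mul_nonneg (sub_nonneg.mpr hU) (pow_nonneg hμ.le 4)]
    linarith [hμ.le, hU, hs2, pow_nonneg hμ.le 2, hs3, pow_nonneg hμ.le 3, hs4, pow_nonneg hμ.le 4, hs5, pow_nonneg hμ.le 5]
  · have e : 8*(B2 4 μ)*(B3 4 μ)^2 + 4*(B2 4 μ)^2*(B4 4 μ) + 4*(B1 4 μ)*(B3 4 μ)*(B4 4 μ) - 16*(qI14 4 μ)*(B4 4 μ)^2 = μ^8 * (46896998400 + 117270720000*μ^1 + 93292416000*μ^2 + 25631424000*μ^3 + 1406361600*μ^4) := by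
      simp only [B1, B2, B3, B4, qI14, PI14]; push_cast; ring
    rw [e]
    refine mul_nonneg (pow_nonneg hμ.le _) ?_
    have hs2 : μ^2 ≤ (11/5)*μ^1 := by
      nlinarith [mul_nonneg (sub_nonneg.mpr hU) (pow_nonneg hμ.le 1)]
    have hs3 : μ^3 ≤ (11/5)*μ^2 := by
      nlinarith [mul_nonneg (sub_nonneg.mpr hU) (pow_nonneg hμ.le 2)]
    have hs4 : μ^4 ≤ (11/5)*μ^3 := by
      nlinarith [mul_nonneg (sub_nonneg.mpr hU) (pow_nonneg hμ.le 3)]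
    linarith [hμ.le, hU, hs2, pow_nonneg hμ.le 2, hs3, pow_nonneg hμ.le 3, hs4, pow_nonneg hμ.le 4]

lemma stab5 (μ : ℝ) (hμ : 0 < μ) (hU : μ ≤ 29/10) (hb0 : 0 ≤ qI14 5 μ) :
    ∀ η : ℂ, PI14c 5 μ η = 0 → η.re ≤ 1 / 2 := by
  apply stable_of 5 μ (by norm_num) hμ ?_ ?_ hb0 ?_ ?_ ?_
  · have e : B1 5 μ = μ^1 * (300 + 840*μ^1 + 420*μ^2 + -48*μ^3) := by
      simp only [B1]; push_cast; ring
    rw [e]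
    refine mul_nonneg (pow_nonneg hμ.le _) ?_
    have hs2 : μ^2 ≤ (29/10)*μ^1 := by
      nlinarith [mul_nonneg (sub_nonneg.mpr hU) (pow_nonneg hμ.le 1)]
    have hs3 : μ^3 ≤ (29/10)*μ^2 := by
      nlinarith [mul_nonneg (sub_nonneg.mpr hU) (pow_nonneg hμ.le 2)]
    linarith [hμ.le, hU, hs2, pow_nonneg hμ.le 2, hs3, pow_nonneg hμ.le 3]
  · have e : B2 5 μ = μ^2 * (1470 + 2520*μ^1 + 546*μ^2) := by
      simp only [B2]; push_cast; ring
    rw [e]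
    refine mul_nonneg (pow_nonneg hμ.le _) ?_
    have hs2 : μ^2 ≤ (29/10)*μ^1 := by
      nlinarith [mul_nonneg (sub_nonneg.mpr hU) (pow_nonneg hμ.le 1)]
    linarith [hμ.le, hU, hs2, pow_nonneg hμ.le 2]
  · have e : B1 5 μ * B2 5 μ * B3 5 μ - (B1 5 μ)^2 * B4 5 μ - qI14 5 μ * (B3 5 μ)^2 = μ^6 * (938649600 + 4787919360*μ^1 + 9225183744*μ^2 + 8413171200*μ^3 + 3652185600*μ^4 + 623185920*μ^5 + 12902400*μ^6) := by
      simp only [B1, B2, B3, B4, qI14, PI14]; push_cast; ring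
    rw [e]
    refine mul_nonneg (pow_nonneg hμ.le _) ?_
    have hs2 : μ^2 ≤ (29/10)*μ^1 := by
      nlinarith [mul_nonneg (sub_nonneg.mpr hU) (pow_nonneg hμ.le 1)]
    have hs3 : μ^3 ≤ (29/10)*μ^2 := by
      nlinarith [mul_nonneg (sub_nonneg.mpr hU) (pow_nonneg hμ.le 2)]
    have hs4 : μ^4 ≤ (29/10)*μ^3 := by
      nlinarith [mul_nonneg (sub_nonneg.mpr hU) (pow_nonneg hμ.le 3)]
    have hs5 : μ^5 ≤ (29/10)*μ^4 := by
      nlinarith [mul_nonneg (sub_nonneg.mpr hU) (pow_nonneg hμ.le 4)]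
    have hs6 : μ^6 ≤ (29/10)*μ^5 := by
      nlinarith [mul_nonneg (sub_nonneg.mpr hU) (pow_nonneg hμ.le 5)]
    linarith [hμ.le, hU, hs2, pow_nonneg hμ.le 2, hs3, pow_nonneg hμ.le 3, hs4, pow_nonneg hμ.le 4, hs5, pow_nonneg hμ.le 5, hs6, pow_nonneg hμ.le 6]
  · have e : 2*(B2 5 μ)^2*(B3 5 μ) + 2*(B1 5 μ)*(B3 5 μ)^2 - 8*(qI14 5 μ)*(B3 5 μ)*(B4 5 μ) = μ^7 * (19344165120 + 81519492096*μ^1 + 123841267200*μ^2 + 82612776960*μ^3 + 22798782720*μ^4 + 1721889792*μ^5) := by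
      simp only [B1, B2, B3, B4, qI14, PI14]; push_cast; ring
    rw [e]
    refine mul_nonneg (pow_nonneg hμ.le _) ?_
    have hs2 : μ^2 ≤ (29/10)*μ^1 := by
      nlinarith [mul_nonneg (sub_nonneg.mpr hU) (pow_nonneg hμ.le 1)]
    have hs3 : μ^3 ≤ (29/10)*μ^2 := by
      nlinarith [mul_nonneg (sub_nonneg.mpr hU) (pow_nonneg hμ.le 2)]
    have hs4 : μ^4 ≤ (29/10)*μ^3 := by
      nlinarith [mul_nonneg (sub_nonneg.mpr hU) (pow_nonneg hμ.le 3)]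
    have hs5 : μ^5 ≤ (29/10)*μ^4 := by
      nlinarith [mul_nonneg (sub_nonneg.mpr hU) (pow_nonneg hμ.le 4)]
    linarith [hμ.le, hU, hs2, pow_nonneg hμ.le 2, hs3, pow_nonneg hμ.le 3, hs4, pow_nonneg hμ.le 4, hs5, pow_nonneg hμ.le 5]
  · have e : 8*(B2 5 μ)*(B3 5 μ)^2 + 4*(B2 5 μ)^2*(B4 5 μ) + 4*(B1 5 μ)*(B3 5 μ)*(B4 5 μ) - 16*(qI14 5 μ)*(B4 5 μ)^2 = μ^8 * (167585193216 + 558902937600*μ^1 + 626251046400*μ^2 + 271018137600*μ^3 + 35434554624*μ^4) := by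
      simp only [B1, B2, B3, B4, qI14, PI14]; push_cast; ring
    rw [e]
    refine mul_nonneg (pow_nonneg hμ.le _) ?_
    have hs2 : μ^2 ≤ (29/10)*μ^1 := by
      nlinarith [mul_nonneg (sub_nonneg.mpr hU) (pow_nonneg hμ.le 1)]
    have hs3 : μ^3 ≤ (29/10)*μ^2 := by
      nlinarith [mul_nonneg (sub_nonneg.mpr hU) (pow_nonneg hμ.le 2)]
    have hs4 : μ^4 ≤ (29/10)*μ^3 := by
      nlinarith [mul_nonneg (sub_nonneg.mpr hU) (pow_nonneg hμ.le 3)]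
    linarith [hμ.le, hU, hs2, pow_nonneg hμ.le 2, hs3, pow_nonneg hμ.le 3, hs4, pow_nonneg hμ.le 4]

lemma stab6 (μ : ℝ) (hμ : 0 < μ) (hU : μ ≤ 43/10) (hb0 : 0 ≤ qI14 6 μ) :
    ∀ η : ℂ, PI14c 6 μ η = 0 → η.re ≤ 1 / 2 := by
  apply stable_of 6 μ (by norm_num) hμ ?_ ?_ hb0 ?_ ?_ ?_
  · have e : B1 6 μ = μ^1 * (350 + 1225*μ^1 + 910*μ^2 + 35*μ^3) := by
      simp only [B1]; push_cast; ring
    rw [e]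
    refine mul_nonneg (pow_nonneg hμ.le _) ?_
    have hs2 : μ^2 ≤ (43/10)*μ^1 := by
      nlinarith [mul_nonneg (sub_nonneg.mpr hU) (pow_nonneg hμ.le 1)]
    have hs3 : μ^3 ≤ (43/10)*μ^2 := by
      nlinarith [mul_nonneg (sub_nonneg.mpr hU) (pow_nonneg hμ.le 2)]
    linarith [hμ.le, hU, hs2, pow_nonneg hμ.le 2, hs3, pow_nonneg hμ.le 3]
  · have e : B2 6 μ = μ^2 * (1960 + 4200*μ^1 + 1400*μ^2) := by
      simp only [B2]; push_cast; ring
    rw [e]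
    refine mul_nonneg (pow_nonneg hμ.le _) ?_
    have hs2 : μ^2 ≤ (43/10)*μ^1 := by
      nlinarith [mul_nonneg (sub_nonneg.mpr hU) (pow_nonneg hμ.le 1)]
    linarith [hμ.le, hU, hs2, pow_nonneg hμ.le 2]
  · have e : B1 6 μ * B2 6 μ * B3 6 μ - (B1 6 μ)^2 * B4 6 μ - qI14 6 μ * (B3 6 μ)^2 = μ^6 * (2230401600 + 14251003200*μ^1 + 35165163600*μ^2 + 42470064000*μ^3 + 25956554400*μ^4 + 7290964800*μ^5 + 659912400*μ^6) := by
      simp only [B1, B2, B3, B4, qI14, PI14]; push_cast; ring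
    rw [e]
    refine mul_nonneg (pow_nonneg hμ.le _) ?_
    have hs2 : μ^2 ≤ (43/10)*μ^1 := by
      nlinarith [mul_nonneg (sub_nonneg.mpr hU) (pow_nonneg hμ.le 1)]
    have hs3 : μ^3 ≤ (43/10)*μ^2 := by
      nlinarith [mul_nonneg (sub_nonneg.mpr hU) (pow_nonneg hμ.le 2)]
    have hs4 : μ^4 ≤ (43/10)*μ^3 := by
      nlinarith [mul_nonneg (sub_nonneg.mpr hU) (pow_nonneg hμ.le 3)]
    have hs5 : μ^5 ≤ (43/10)*μ^4 := by
      nlinarith [mul_nonneg (sub_nonneg.mpr hU) (pow_nonneg hμ.le 4)]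
    have hs6 : μ^6 ≤ (43/10)*μ^5 := by
      nlinarith [mul_nonneg (sub_nonneg.mpr hU) (pow_nonneg hμ.le 5)]
    linarith [hμ.le, hU, hs2, pow_nonneg hμ.le 2, hs3, pow_nonneg hμ.le 3, hs4, pow_nonneg hμ.le 4, hs5, pow_nonneg hμ.le 5, hs6, pow_nonneg hμ.le 6]
  · have e : 2*(B2 6 μ)^2*(B3 6 μ) + 2*(B1 6 μ)*(B3 6 μ)^2 - 8*(qI14 6 μ)*(B3 6 μ)*(B4 6 μ) = μ^7 * (51627340800 + 272197900800*μ^1 + 530159616000*μ^2 + 471058560000*μ^3 + 186357427200*μ^4 + 24887923200*μ^5) := by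
      simp only [B1, B2, B3, B4, qI14, PI14]; push_cast; ring
    rw [e]
    refine mul_nonneg (pow_nonneg hμ.le _) ?_
    have hs2 : μ^2 ≤ (43/10)*μ^1 := by
      nlinarith [mul_nonneg (sub_nonneg.mpr hU) (pow_nonneg hμ.le 1)]
    have hs3 : μ^3 ≤ (43/10)*μ^2 := by
      nlinarith [mul_nonneg (sub_nonneg.mpr hU) (pow_nonneg hμ.le 2)]
    have hs4 : μ^4 ≤ (43/10)*μ^3 := by
      nlinarith [mul_nonneg (sub_nonneg.mpr hU) (pow_nonneg hμ.le 3)]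
    have hs5 : μ^5 ≤ (43/10)*μ^4 := by
      nlinarith [mul_nonneg (sub_nonneg.mpr hU) (pow_nonneg hμ.le 4)]
    linarith [hμ.le, hU, hs2, pow_nonneg hμ.le 2, hs3, pow_nonneg hμ.le 3, hs4, pow_nonneg hμ.le 4, hs5, pow_nonneg hμ.le 5]
  · have e : 8*(B2 6 μ)*(B3 6 μ)^2 + 4*(B2 6 μ)^2*(B4 6 μ) + 4*(B1 6 μ)*(B3 6 μ)*(B4 6 μ) - 16*(qI14 6 μ)*(B4 6 μ)^2 = μ^8 * (501551769600 + 2091229056000*μ^1 + 3008960640000*μ^2 + 1745428608000*μ^3 + 334273766400*μ^4) := by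
      simp only [B1, B2, B3, B4, qI14, PI14]; push_cast; ring
    rw [e]
    refine mul_nonneg (pow_nonneg hμ.le _) ?_
    have hs2 : μ^2 ≤ (43/10)*μ^1 := by
      nlinarith [mul_nonneg (sub_nonneg.mpr hU) (pow_nonneg hμ.le 1)]
    have hs3 : μ^3 ≤ (43/10)*μ^2 := by
      nlinarith [mul_nonneg (sub_nonneg.mpr hU) (pow_nonneg hμ.le 2)]
    have hs4 : μ^4 ≤ (43/10)*μ^3 := by
      nlinarith [mul_nonneg (sub_nonneg.mpr hU) (pow_nonneg hμ.le 3)]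
    linarith [hμ.le, hU, hs2, pow_nonneg hμ.le 2, hs3, pow_nonneg hμ.le 3, hs4, pow_nonneg hμ.le 4]

lemma stab7 (μ : ℝ) (hμ : 0 < μ) (hU : μ ≤ 87/10) (hb0 : 0 ≤ qI14 7 μ) :
    ∀ η : ℂ, PI14c 7 μ η = 0 → η.re ≤ 1 / 2 := by
  apply stable_of 7 μ (by norm_num) hμ ?_ ?_ hb0 ?_ ?_ ?_
  · have e : B1 7 μ = μ^1 * (400 + 1680*μ^1 + 1640*μ^2 + 240*μ^3) := by
      simp only [B1]; push_cast; ring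
    rw [e]
    refine mul_nonneg (pow_nonneg hμ.le _) ?_
    have hs2 : μ^2 ≤ (87/10)*μ^1 := by
      nlinarith [mul_nonneg (sub_nonneg.mpr hU) (pow_nonneg hμ.le 1)]
    have hs3 : μ^3 ≤ (87/10)*μ^2 := by
      nlinarith [mul_nonneg (sub_nonneg.mpr hU) (pow_nonneg hμ.le 2)]
    linarith [hμ.le, hU, hs2, pow_nonneg hμ.le 2, hs3, pow_nonneg hμ.le 3]
  · have e : B2 7 μ = μ^2 * (2520 + 6480*μ^1 + 2880*μ^2) := by
      simp only [B2]; push_cast; ring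
    rw [e]
    refine mul_nonneg (pow_nonneg hμ.le _) ?_
    have hs2 : μ^2 ≤ (87/10)*μ^1 := by
      nlinarith [mul_nonneg (sub_nonneg.mpr hU) (pow_nonneg hμ.le 1)]
    linarith [hμ.le, hU, hs2, pow_nonneg hμ.le 2]
  · have e : B1 7 μ * B2 7 μ * B3 7 μ - (B1 7 μ)^2 * B4 7 μ - qI14 7 μ * (B3 7 μ)^2 = μ^6 * (4746240000 + 36446976000*μ^1 + 109506585600*μ^2 + 163918080000*μ^3 + 127603584000*μ^4 + 48010752000*μ^5 + 6560870400*μ^6) := by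
      simp only [B1, B2, B3, B4, qI14, PI14]; push_cast; ring
    rw [e]
    refine mul_nonneg (pow_nonneg hμ.le _) ?_
    have hs2 : μ^2 ≤ (87/10)*μ^1 := by
      nlinarith [mul_nonneg (sub_nonneg.mpr hU) (pow_nonneg hμ.le 1)]
    have hs3 : μ^3 ≤ (87/10)*μ^2 := by
      nlinarith [mul_nonneg (sub_nonneg.mpr hU) (pow_nonneg hμ.le 2)]
    have hs4 : μ^4 ≤ (87/10)*μ^3 := by
      nlinarith [mul_nonneg (sub_nonneg.mpr hU) (pow_nonneg hμ.le 3)]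
    have hs5 : μ^5 ≤ (87/10)*μ^4 := by
      nlinarith [mul_nonneg (sub_nonneg.mpr hU) (pow_nonneg hμ.le 4)]
    have hs6 : μ^6 ≤ (87/10)*μ^5 := by
      nlinarith [mul_nonneg (sub_nonneg.mpr hU) (pow_nonneg hμ.le 5)]
    linarith [hμ.le, hU, hs2, pow_nonneg hμ.le 2, hs3, pow_nonneg hμ.le 3, hs4, pow_nonneg hμ.le 4, hs5, pow_nonneg hμ.le 5, hs6, pow_nonneg hμ.le 6]
  · have e : 2*(B2 7 μ)^2*(B3 7 μ) + 2*(B1 7 μ)*(B3 7 μ)^2 - 8*(qI14 7 μ)*(B3 7 μ)*(B4 7 μ) = μ^7 * (121969152000 + 772175462400*μ^1 + 1831942656000*μ^2 + 2022506496000*μ^3 + 1026100224000*μ^4 + 186823065600*μ^5) := by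
      simp only [B1, B2, B3, B4, qI14, PI14]; push_cast; ring
    rw [e]
    refine mul_nonneg (pow_nonneg hμ.le _) ?_
    have hs2 : μ^2 ≤ (87/10)*μ^1 := by
      nlinarith [mul_nonneg (sub_nonneg.mpr hU) (pow_nonneg hμ.le 1)]
    have hs3 : μ^3 ≤ (87/10)*μ^2 := by
      nlinarith [mul_nonneg (sub_nonneg.mpr hU) (pow_nonneg hμ.le 2)]
    have hs4 : μ^4 ≤ (87/10)*μ^3 := by
      nlinarith [mul_nonneg (sub_nonneg.mpr hU) (pow_nonneg hμ.le 3)]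
    have hs5 : μ^5 ≤ (87/10)*μ^4 := by
      nlinarith [mul_nonneg (sub_nonneg.mpr hU) (pow_nonneg hμ.le 4)]
    linarith [hμ.le, hU, hs2, pow_nonneg hμ.le 2, hs3, pow_nonneg hμ.le 3, hs4, pow_nonneg hμ.le 4, hs5, pow_nonneg hμ.le 5]
  · have e : 8*(B2 7 μ)*(B3 7 μ)^2 + 4*(B2 7 μ)^2*(B4 7 μ) + 4*(B1 7 μ)*(B3 7 μ)*(B4 7 μ) - 16*(qI14 7 μ)*(B4 7 μ)^2 = μ^8 * (1313426534400 + 6572399616000*μ^1 + 11527183872000*μ^2 + 8332139520000*μ^3 + 2062435737600*μ^4) := by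
      simp only [B1, B2, B3, B4, qI14, PI14]; push_cast; ring
    rw [e]
    refine mul_nonneg (pow_nonneg hμ.le _) ?_
    have hs2 : μ^2 ≤ (87/10)*μ^1 := by
      nlinarith [mul_nonneg (sub_nonneg.mpr hU) (pow_nonneg hμ.le 1)]
    have hs3 : μ^3 ≤ (87/10)*μ^2 := by
      nlinarith [mul_nonneg (sub_nonneg.mpr hU) (pow_nonneg hμ.le 2)]
    have hs4 : μ^4 ≤ (87/10)*μ^3 := by
      nlinarith [mul_nonneg (sub_nonneg.mpr hU) (pow_nonneg hμ.le 3)]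
    linarith [hμ.le, hU, hs2, pow_nonneg hμ.le 2, hs3, pow_nonneg hμ.le 3, hs4, pow_nonneg hμ.le 4]

lemma mum_lt1 (μm : ℝ) (hμm : 0 < μm) (hq : qI14 1 μm = 0)
    (hmin : ∀ x : ℝ, 0 < x → qI14 1 x = 0 → μm ≤ x) : μm < 13/10 := by
  have hU : qI14 1 (13/10) = -27189/10000 := by
    simp only [qI14, PI14]; norm_num
  have hmem : (0:ℝ) ∈ Set.Icc (qI14 1 (13/10)) (qI14 1 0) := by
    rw [hU, qI14_zero]; constructor <;> norm_num
  obtain ⟨r, hr, hfr⟩ := intermediate_value_Icc' (by norm_num : (0:ℝ) ≤ 13/10)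
    ((qI14_cont 1).continuousOn) hmem
  have hfr' : qI14 1 r = 0 := hfr
  have hr0 : 0 < r := by
    rcases eq_or_lt_of_le hr.1 with h0 | h0
    · exfalso; rw [← h0, qI14_zero] at hfr'; norm_num at hfr'
    · exact h0
  have hrU : r ≠ 13/10 := by
    intro h; rw [h, hU] at hfr'; norm_num at hfr'
  exact lt_of_le_of_lt (hmin r hr0 hfr') (lt_of_le_of_ne hr.2 hrU)

lemma mum_lt2 (μm : ℝ) (hμm : 0 < μm) (hq : qI14 2 μm = 0)
    (hmin : ∀ x : ℝ, 0 < x → qI14 2 x = 0 → μm ≤ x) : μm < 3/2 := by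
  have hU : qI14 2 (3/2) = -105/16 := by
    simp only [qI14, PI14]; norm_num
  have hmem : (0:ℝ) ∈ Set.Icc (qI14 2 (3/2)) (qI14 2 0) := by
    rw [hU, qI14_zero]; constructor <;> norm_num
  obtain ⟨r, hr, hfr⟩ := intermediate_value_Icc' (by norm_num : (0:ℝ) ≤ 3/2)
    ((qI14_cont 2).continuousOn) hmem
  have hfr' : qI14 2 r = 0 := hfr
  have hr0 : 0 < r := by
    rcases eq_or_lt_of_le hr.1 with h0 | h0
    · exfalso; rw [← h0, qI14_zero] at hfr'; norm_num at hfr'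
    · exact h0
  have hrU : r ≠ 3/2 := by
    intro h; rw [h, hU] at hfr'; norm_num at hfr'
  exact lt_of_le_of_lt (hmin r hr0 hfr') (lt_of_le_of_ne hr.2 hrU)

lemma mum_lt3 (μm : ℝ) (hμm : 0 < μm) (hq : qI14 3 μm = 0)
    (hmin : ∀ x : ℝ, 0 < x → qI14 3 x = 0 → μm ≤ x) : μm < 7/4 := by
  have hU : qI14 3 (7/4) = -4995/512 := by
    simp only [qI14, PI14]; norm_num
  have hmem : (0:ℝ) ∈ Set.Icc (qI14 3 (7/4)) (qI14 3 0) := by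
    rw [hU, qI14_zero]; constructor <;> norm_num
  obtain ⟨r, hr, hfr⟩ := intermediate_value_Icc' (by norm_num : (0:ℝ) ≤ 7/4)
    ((qI14_cont 3).continuousOn) hmem
  have hfr' : qI14 3 r = 0 := hfr
  have hr0 : 0 < r := by
    rcases eq_or_lt_of_le hr.1 with h0 | h0
    · exfalso; rw [← h0, qI14_zero] at hfr'; norm_num at hfr'
    · exact h0
  have hrU : r ≠ 7/4 := by
    intro h; rw [h, hU] at hfr'; norm_num at hfr'
  exact lt_of_le_of_lt (hmin r hr0 hfr') (lt_of_le_of_ne hr.2 hrU)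

lemma mum_lt4 (μm : ℝ) (hμm : 0 < μm) (hq : qI14 4 μm = 0)
    (hmin : ∀ x : ℝ, 0 < x → qI14 4 x = 0 → μm ≤ x) : μm < 11/5 := by
  have hU : qI14 4 (11/5) = -20904/625 := by
    simp only [qI14, PI14]; norm_num
  have hmem : (0:ℝ) ∈ Set.Icc (qI14 4 (11/5)) (qI14 4 0) := by
    rw [hU, qI14_zero]; constructor <;> norm_num
  obtain ⟨r, hr, hfr⟩ := intermediate_value_Icc' (by norm_num : (0:ℝ) ≤ 11/5)
    ((qI14_cont 4).continuousOn) hmem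
  have hfr' : qI14 4 r = 0 := hfr
  have hr0 : 0 < r := by
    rcases eq_or_lt_of_le hr.1 with h0 | h0
    · exfalso; rw [← h0, qI14_zero] at hfr'; norm_num at hfr'
    · exact h0
  have hrU : r ≠ 11/5 := by
    intro h; rw [h, hU] at hfr'; norm_num at hfr'
  exact lt_of_le_of_lt (hmin r hr0 hfr') (lt_of_le_of_ne hr.2 hrU)

lemma mum_lt5 (μm : ℝ) (hμm : 0 < μm) (hq : qI14 5 μm = 0)
    (hmin : ∀ x : ℝ, 0 < x → qI14 5 x = 0 → μm ≤ x) : μm < 29/10 := by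
  have hU : qI14 5 (29/10) = -62493/800 := by
    simp only [qI14, PI14]; norm_num
  have hmem : (0:ℝ) ∈ Set.Icc (qI14 5 (29/10)) (qI14 5 0) := by
    rw [hU, qI14_zero]; constructor <;> norm_num
  obtain ⟨r, hr, hfr⟩ := intermediate_value_Icc' (by norm_num : (0:ℝ) ≤ 29/10)
    ((qI14_cont 5).continuousOn) hmem
  have hfr' : qI14 5 r = 0 := hfr
  have hr0 : 0 < r := by
    rcases eq_or_lt_of_le hr.1 with h0 | h0
    · exfalso; rw [← h0, qI14_zero] at hfr'; norm_num at hfr'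
    · exact h0
  have hrU : r ≠ 29/10 := by
    intro h; rw [h, hU] at hfr'; norm_num at hfr'
  exact lt_of_le_of_lt (hmin r hr0 hfr') (lt_of_le_of_ne hr.2 hrU)

lemma mum_lt6 (μm : ℝ) (hμm : 0 < μm) (hq : qI14 6 μm = 0)
    (hmin : ∀ x : ℝ, 0 < x → qI14 6 x = 0 → μm ≤ x) : μm < 43/10 := by
  have hU : qI14 6 (43/10) = -3593433/20000 := by
    simp only [qI14, PI14]; norm_num
  have hmem : (0:ℝ) ∈ Set.Icc (qI14 6 (43/10)) (qI14 6 0) := by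
    rw [hU, qI14_zero]; constructor <;> norm_num
  obtain ⟨r, hr, hfr⟩ := intermediate_value_Icc' (by norm_num : (0:ℝ) ≤ 43/10)
    ((qI14_cont 6).continuousOn) hmem
  have hfr' : qI14 6 r = 0 := hfr
  have hr0 : 0 < r := by
    rcases eq_or_lt_of_le hr.1 with h0 | h0
    · exfalso; rw [← h0, qI14_zero] at hfr'; norm_num at hfr'
    · exact h0
  have hrU : r ≠ 43/10 := by
    intro h; rw [h, hU] at hfr'; norm_num at hfr'
  exact lt_of_le_of_lt (hmin r hr0 hfr') (lt_of_le_of_ne hr.2 hrU)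

lemma mum_lt7 (μm : ℝ) (hμm : 0 < μm) (hq : qI14 7 μm = 0)
    (hmin : ∀ x : ℝ, 0 < x → qI14 7 x = 0 → μm ≤ x) : μm < 87/10 := by
  have hU : qI14 7 (87/10) = -5336727/5000 := by
    simp only [qI14, PI14]; norm_num
  have hmem : (0:ℝ) ∈ Set.Icc (qI14 7 (87/10)) (qI14 7 0) := by
    rw [hU, qI14_zero]; constructor <;> norm_num
  obtain ⟨r, hr, hfr⟩ := intermediate_value_Icc' (by norm_num : (0:ℝ) ≤ 87/10)
    ((qI14_cont 7).continuousOn) hmem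
  have hfr' : qI14 7 r = 0 := hfr
  have hr0 : 0 < r := by
    rcases eq_or_lt_of_le hr.1 with h0 | h0
    · exfalso; rw [← h0, qI14_zero] at hfr'; norm_num at hfr'
    · exact h0
  have hrU : r ≠ 87/10 := by
    intro h; rw [h, hU] at hfr'; norm_num at hfr'
  exact lt_of_le_of_lt (hmin r hr0 hfr') (lt_of_le_of_ne hr.2 hrU)

lemma qpos1 (x : ℝ) (hx : 0 < x) (hL : x ≤ 1) : 0 < qI14 1 x := by
  have e : qI14 1 x = 24 + (-35/2)*x^2 + 1*x^4 := by
    simp only [qI14, PI14]; push_cast; ring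
  rw [e]
  have hs2 : x^2 ≤ (1)*x^1 := by
    nlinarith [mul_nonneg (sub_nonneg.mpr hL) (pow_nonneg hx.le 1)]
  have hs3 : x^3 ≤ (1)*x^2 := by
    nlinarith [mul_nonneg (sub_nonneg.mpr hL) (pow_nonneg hx.le 2)]
  have hs4 : x^4 ≤ (1)*x^3 := by
    nlinarith [mul_nonneg (sub_nonneg.mpr hL) (pow_nonneg hx.le 3)]
  linarith [hx.le, hL, hs2, pow_nonneg hx.le 2, hs3, pow_nonneg hx.le 3, hs4, pow_nonneg hx.le 4]

lemma qpos2 (x : ℝ) (hx : 0 < x) (hL : x ≤ 1) : 0 < qI14 2 x := by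
  have e : qI14 2 x = 24 + 25*x^1 + (-35/2)*x^2 + -10*x^3 + 1*x^4 := by
    simp only [qI14, PI14]; push_cast; ring
  rw [e]
  have hs2 : x^2 ≤ (1)*x^1 := by
    nlinarith [mul_nonneg (sub_nonneg.mpr hL) (pow_nonneg hx.le 1)]
  have hs3 : x^3 ≤ (1)*x^2 := by
    nlinarith [mul_nonneg (sub_nonneg.mpr hL) (pow_nonneg hx.le 2)]
  have hs4 : x^4 ≤ (1)*x^3 := by
    nlinarith [mul_nonneg (sub_nonneg.mpr hL) (pow_nonneg hx.le 3)]
  linarith [hx.le, hL, hs2, pow_nonneg hx.le 2, hs3, pow_nonneg hx.le 3, hs4, pow_nonneg hx.le 4]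

lemma qpos3 (x : ℝ) (hx : 0 < x) (hL : x ≤ 1) : 0 < qI14 3 x := by
  have e : qI14 3 x = 24 + 50*x^1 + -20*x^3 + (-3/2)*x^4 := by
    simp only [qI14, PI14]; push_cast; ring
  rw [e]
  have hs2 : x^2 ≤ (1)*x^1 := by
    nlinarith [mul_nonneg (sub_nonneg.mpr hL) (pow_nonneg hx.le 1)]
  have hs3 : x^3 ≤ (1)*x^2 := by
    nlinarith [mul_nonneg (sub_nonneg.mpr hL) (pow_nonneg hx.le 2)]
  have hs4 : x^4 ≤ (1)*x^3 := by
    nlinarith [mul_nonneg (sub_nonneg.mpr hL) (pow_nonneg hx.le 3)]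
  linarith [hx.le, hL, hs2, pow_nonneg hx.le 2, hs3, pow_nonneg hx.le 3, hs4, pow_nonneg hx.le 4]

lemma qpos4 (x : ℝ) (hx : 0 < x) (hL : x ≤ 9/5) : 0 < qI14 4 x := by
  have e : qI14 4 x = 24 + 75*x^1 + 35*x^2 + (-45/2)*x^3 + (-13/2)*x^4 := by
    simp only [qI14, PI14]; push_cast; ring
  rw [e]
  have hs2 : x^2 ≤ (9/5)*x^1 := by
    nlinarith [mul_nonneg (sub_nonneg.mpr hL) (pow_nonneg hx.le 1)]
  have hs3 : x^3 ≤ (9/5)*x^2 := by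
    nlinarith [mul_nonneg (sub_nonneg.mpr hL) (pow_nonneg hx.le 2)]
  have hs4 : x^4 ≤ (9/5)*x^3 := by
    nlinarith [mul_nonneg (sub_nonneg.mpr hL) (pow_nonneg hx.le 3)]
  linarith [hx.le, hL, hs2, pow_nonneg hx.le 2, hs3, pow_nonneg hx.le 3, hs4, pow_nonneg hx.le 4]

lemma qpos5 (x : ℝ) (hx : 0 < x) (hL : x ≤ 2) : 0 < qI14 5 x := by
  have e : qI14 5 x = 24 + 100*x^1 + (175/2)*x^2 + -10*x^3 + (-25/2)*x^4 := by
    simp only [qI14, PI14]; push_cast; ring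
  rw [e]
  have hs2 : x^2 ≤ (2)*x^1 := by
    nlinarith [mul_nonneg (sub_nonneg.mpr hL) (pow_nonneg hx.le 1)]
  have hs3 : x^3 ≤ (2)*x^2 := by
    nlinarith [mul_nonneg (sub_nonneg.mpr hL) (pow_nonneg hx.le 2)]
  have hs4 : x^4 ≤ (2)*x^3 := by
    nlinarith [mul_nonneg (sub_nonneg.mpr hL) (pow_nonneg hx.le 3)]
  linarith [hx.le, hL, hs2, pow_nonneg hx.le 2, hs3, pow_nonneg hx.le 3, hs4, pow_nonneg hx.le 4]

lemma qpos6 (x : ℝ) (hx : 0 < x) (hL : x ≤ 31/10) : 0 < qI14 6 x := by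
  have e : qI14 6 x = 24 + 125*x^1 + (315/2)*x^2 + 25*x^3 + (-33/2)*x^4 := by
    simp only [qI14, PI14]; push_cast; ring
  rw [e]
  have hs2 : x^2 ≤ (31/10)*x^1 := by
    nlinarith [mul_nonneg (sub_nonneg.mpr hL) (pow_nonneg hx.le 1)]
  have hs3 : x^3 ≤ (31/10)*x^2 := by
    nlinarith [mul_nonneg (sub_nonneg.mpr hL) (pow_nonneg hx.le 2)]
  have hs4 : x^4 ≤ (31/10)*x^3 := by
    nlinarith [mul_nonneg (sub_nonneg.mpr hL) (pow_nonneg hx.le 3)]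
  linarith [hx.le, hL, hs2, pow_nonneg hx.le 2, hs3, pow_nonneg hx.le 3, hs4, pow_nonneg hx.le 4]

lemma qpos7 (x : ℝ) (hx : 0 < x) (hL : x ≤ 13/2) : 0 < qI14 7 x := by
  have e : qI14 7 x = 24 + 150*x^1 + 245*x^2 + 90*x^3 + -14*x^4 := by
    simp only [qI14, PI14]; push_cast; ring
  rw [e]
  have hs2 : x^2 ≤ (13/2)*x^1 := by
    nlinarith [mul_nonneg (sub_nonneg.mpr hL) (pow_nonneg hx.le 1)]
  have hs3 : x^3 ≤ (13/2)*x^2 := by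
    nlinarith [mul_nonneg (sub_nonneg.mpr hL) (pow_nonneg hx.le 2)]
  have hs4 : x^4 ≤ (13/2)*x^3 := by
    nlinarith [mul_nonneg (sub_nonneg.mpr hL) (pow_nonneg hx.le 3)]
  linarith [hx.le, hL, hs2, pow_nonneg hx.le 2, hs3, pow_nonneg hx.le 3, hs4, pow_nonneg hx.le 4]

lemma hneg1 (x1 x2 : ℝ) (hL : 1 ≤ x1) (h12 : x1 ≤ x2) (hC : x2 ≤ 2) :
    (-35/2)*(x1+x2) + 1*(x1^3+x1^2*x2+x1*x2^2+x2^3) < 0 := by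
  nlinarith [sq_nonneg x1, sq_nonneg x2, mul_nonneg (sub_nonneg.mpr h12) (sub_nonneg.mpr hL), sq_nonneg (x1+x2), sq_nonneg (x1-x2), mul_pos (lt_of_lt_of_le one_pos hL) (lt_of_lt_of_le one_pos (le_trans hL h12))]

lemma hneg2 (x1 x2 : ℝ) (hL : 1 ≤ x1) (h12 : x1 ≤ x2) (hC : x2 ≤ 14/5) :
    25 + (-35/2)*(x1+x2) + -10*(x1^2+x1*x2+x2^2) + 1*(x1^3+x1^2*x2+x1*x2^2+x2^3) < 0 := by
  nlinarith [mul_nonneg (sub_nonneg.mpr hL) (sub_nonneg.mpr h12), mul_nonneg (sub_nonneg.mpr h12) (sub_nonneg.mpr hC), mul_nonneg (sub_nonneg.mpr hL) (sub_nonneg.mpr hC), mul_nonneg (mul_nonneg (sub_nonneg.mpr hL) (sub_nonneg.mpr h12)) (sub_nonneg.mpr hC), sq_nonneg (x1-x2), sq_nonneg x1, sq_nonneg x2, mul_nonneg (sub_nonneg.mpr (le_trans hL h12)) (sub_nonneg.mpr hC), mul_nonneg (mul_nonneg (sub_nonneg.mpr hL) (sub_nonneg.mpr hL)) (sub_nonneg.mpr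 hC)]

lemma hneg3 (x1 x2 : ℝ) (hL : 1 ≤ x1) (h12 : x1 ≤ x2) :
    50 + -20*(x1^2+x1*x2+x2^2) + (-3/2)*(x1^3+x1^2*x2+x1*x2^2+x2^3) < 0 := by
  nlinarith [mul_nonneg (sub_nonneg.mpr hL) (sub_nonneg.mpr h12), sq_nonneg (x1-x2), mul_nonneg (mul_nonneg (sub_nonneg.mpr hL) (sub_nonneg.mpr hL)) (sub_nonneg.mpr hL), mul_nonneg (mul_nonneg (sub_nonneg.mpr hL) (sub_nonneg.mpr hL)) (sub_nonneg.mpr h12), mul_nonneg (mul_nonneg (sub_nonneg.mpr hL) (sub_nonneg.mpr h12)) (sub_nonneg.mpr h12), mul_nonneg (mul_nonneg (sub_nonneg.mpr h12) (sub_nonneg.mpr h12)) (sub_nonneg.mpr h12), mul_nonneg (sub_nonneg.mpr hL) (sub_nonneg.mpr hL), mul_nonneg (sub_nonneg.mpr h12) (sub_nonneg.mpr h12)]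

lemma hneg4 (x1 x2 : ℝ) (hL : 9/5 ≤ x1) (h12 : x1 ≤ x2) :
    75 + 35*(x1+x2) + (-45/2)*(x1^2+x1*x2+x2^2) + (-13/2)*(x1^3+x1^2*x2+x1*x2^2+x2^3) < 0 := by
  nlinarith [mul_nonneg (sub_nonneg.mpr hL) (sub_nonneg.mpr h12), sq_nonneg (x1-x2), mul_nonneg (mul_nonneg (sub_nonneg.mpr hL) (sub_nonneg.mpr hL)) (sub_nonneg.mpr hL), mul_nonneg (mul_nonneg (sub_nonneg.mpr hL) (sub_nonneg.mpr hL)) (sub_nonneg.mpr h12), mul_nonneg (mul_nonneg (sub_nonneg.mpr hL) (sub_nonneg.mpr h12)) (sub_nonneg.mpr h12), mul_nonneg (mul_nonneg (sub_nonneg.mpr h12) (sub_nonneg.mpr h12)) (sub_nonneg.mpr h12), mul_nonneg (sub_nonneg.mpr hL) (sub_nonneg.mpr hL), mul_nonneg (sub_nonneg.mpr h12) (sub_nonneg.mpr h12)]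

lemma hneg5 (x1 x2 : ℝ) (hL : 2 ≤ x1) (h12 : x1 ≤ x2) :
    100 + (175/2)*(x1+x2) + -10*(x1^2+x1*x2+x2^2) + (-25/2)*(x1^3+x1^2*x2+x1*x2^2+x2^3) < 0 := by
  nlinarith [mul_nonneg (sub_nonneg.mpr hL) (sub_nonneg.mpr h12), sq_nonneg (x1-x2), mul_nonneg (mul_nonneg (sub_nonneg.mpr hL) (sub_nonneg.mpr hL)) (sub_nonneg.mpr hL), mul_nonneg (mul_nonneg (sub_nonneg.mpr hL) (sub_nonneg.mpr hL)) (sub_nonneg.mpr h12), mul_nonneg (mul_nonneg (sub_nonneg.mpr hL) (sub_nonneg.mpr h12)) (sub_nonneg.mpr h12), mul_nonneg (mul_nonneg (sub_nonneg.mpr h12) (sub_nonneg.mpr h12)) (sub_nonneg.mpr h12), mul_nonneg (sub_nonneg.mpr hL) (sub_nonneg.mpr hL), mul_nonneg (sub_nonneg.mpr h12) (sub_nonneg.mpr h12)]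

lemma hneg6 (x1 x2 : ℝ) (hL : 31/10 ≤ x1) (h12 : x1 ≤ x2) :
    125 + (315/2)*(x1+x2) + 25*(x1^2+x1*x2+x2^2) + (-33/2)*(x1^3+x1^2*x2+x1*x2^2+x2^3) < 0 := by
  nlinarith [mul_nonneg (sub_nonneg.mpr hL) (sub_nonneg.mpr h12), sq_nonneg (x1-x2), mul_nonneg (mul_nonneg (sub_nonneg.mpr hL) (sub_nonneg.mpr hL)) (sub_nonneg.mpr hL), mul_nonneg (mul_nonneg (sub_nonneg.mpr hL) (sub_nonneg.mpr hL)) (sub_nonneg.mpr h12), mul_nonneg (mul_nonneg (sub_nonneg.mpr hL) (sub_nonneg.mpr h12)) (sub_nonneg.mpr h12), mul_nonneg (mul_nonneg (sub_nonneg.mpr h12) (sub_nonneg.mpr h12)) (sub_nonneg.mpr h12), mul_nonneg (sub_nonneg.mpr hL) (sub_nonneg.mpr hL), mul_nonneg (sub_nonneg.mpr h12) (sub_nonneg.mpr h12)]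

lemma hneg7 (x1 x2 : ℝ) (hL : 13/2 ≤ x1) (h12 : x1 ≤ x2) :
    150 + 245*(x1+x2) + 90*(x1^2+x1*x2+x2^2) + -14*(x1^3+x1^2*x2+x1*x2^2+x2^3) < 0 := by
  nlinarith [mul_nonneg (sub_nonneg.mpr hL) (sub_nonneg.mpr h12), sq_nonneg (x1-x2), mul_nonneg (mul_nonneg (sub_nonneg.mpr hL) (sub_nonneg.mpr hL)) (sub_nonneg.mpr hL), mul_nonneg (mul_nonneg (sub_nonneg.mpr hL) (sub_nonneg.mpr hL)) (sub_nonneg.mpr h12), mul_nonneg (mul_nonneg (sub_nonneg.mpr hL) (sub_nonneg.mpr h12)) (sub_nonneg.mpr h12), mul_nonneg (mul_nonneg (sub_nonneg.mpr h12) (sub_nonneg.mpr h12)) (sub_nonneg.mpr h12), mul_nonneg (sub_nonneg.mpr hL) (sub_nonneg.mpr hL), mul_nonneg (sub_nonneg.mpr h12) (sub_nonneg.mpr h12)]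

lemma qneg1 (μm μ : ℝ) (hμm : 0 < μm) (hq : qI14 1 μm = 0)
    (hmin : ∀ x : ℝ, 0 < x → qI14 1 x = 0 → μm ≤ x) (hgt : μm < μ) (hC : μ ≤ 2) :
    qI14 1 μ < 0 := by
  have hL : 1 ≤ μm := by
    by_contra hc
    push_neg at hc
    exact absurd hq (ne_of_gt (qpos1 μm hμm hc.le))
  have e : qI14 1 μ - qI14 1 μm = (μ - μm) * ((-35/2)*(μm+μ) + 1*(μm^3+μm^2*μ+μm*μ^2+μ^3)) := by
    simp only [qI14, PI14]; push_cast; ring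
  have hh := hneg1 μm μ hL hgt.le hC
  nlinarith [mul_pos (sub_pos.mpr hgt) (neg_pos.mpr hh)]

lemma qneg2 (μm μ : ℝ) (hμm : 0 < μm) (hq : qI14 2 μm = 0)
    (hmin : ∀ x : ℝ, 0 < x → qI14 2 x = 0 → μm ≤ x) (hgt : μm < μ) (hC : μ ≤ 14/5) :
    qI14 2 μ < 0 := by
  have hL : 1 ≤ μm := by
    by_contra hc
    push_neg at hc
    exact absurd hq (ne_of_gt (qpos2 μm hμm hc.le))
  have e : qI14 2 μ - qI14 2 μm = (μ - μm) * (25 + (-35/2)*(μm+μ) + -10*(μm^2+μm*μ+μ^2) + 1*(μm^3+μm^2*μ+μm*μ^2+μ^3)) := by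
    simp only [qI14, PI14]; push_cast; ring
  have hh := hneg2 μm μ hL hgt.le hC
  nlinarith [mul_pos (sub_pos.mpr hgt) (neg_pos.mpr hh)]

lemma qneg3 (μm μ : ℝ) (hμm : 0 < μm) (hq : qI14 3 μm = 0)
    (hmin : ∀ x : ℝ, 0 < x → qI14 3 x = 0 → μm ≤ x) (hgt : μm < μ) :
    qI14 3 μ < 0 := by
  have hL : 1 ≤ μm := by
    by_contra hc
    push_neg at hc
    exact absurd hq (ne_of_gt (qpos3 μm hμm hc.le))
  have e : qI14 3 μ - qI14 3 μm = (μ - μm) * (50 + -20*(μm^2+μm*μ+μ^2) + (-3/2)*(μm^3+μm^2*μ+μm*μ^2+μ^3)) := by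
    simp only [qI14, PI14]; push_cast; ring
  have hh := hneg3 μm μ hL hgt.le
  nlinarith [mul_pos (sub_pos.mpr hgt) (neg_pos.mpr hh)]

lemma qneg4 (μm μ : ℝ) (hμm : 0 < μm) (hq : qI14 4 μm = 0)
    (hmin : ∀ x : ℝ, 0 < x → qI14 4 x = 0 → μm ≤ x) (hgt : μm < μ) :
    qI14 4 μ < 0 := by
  have hL : 9/5 ≤ μm := by
    by_contra hc
    push_neg at hc
    exact absurd hq (ne_of_gt (qpos4 μm hμm hc.le))
  have e : qI14 4 μ - qI14 4 μm = (μ - μm) * (75 + 35*(μm+μ) + (-45/2)*(μm^2+μm*μ+μ^2) + (-13/2)*(μm^3+μm^2*μ+μm*μ^2+μ^3)) := by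
    simp only [qI14, PI14]; push_cast; ring
  have hh := hneg4 μm μ hL hgt.le
  nlinarith [mul_pos (sub_pos.mpr hgt) (neg_pos.mpr hh)]

lemma qneg5 (μm μ : ℝ) (hμm : 0 < μm) (hq : qI14 5 μm = 0)
    (hmin : ∀ x : ℝ, 0 < x → qI14 5 x = 0 → μm ≤ x) (hgt : μm < μ) :
    qI14 5 μ < 0 := by
  have hL : 2 ≤ μm := by
    by_contra hc
    push_neg at hc
    exact absurd hq (ne_of_gt (qpos5 μm hμm hc.le))
  have e : qI14 5 μ - qI14 5 μm = (μ - μm) * (100 + (175/2)*(μm+μ) + -10*(μm^2+μm*μ+μ^2) + (-25/2)*(μm^3+μm^2*μ+μm*μ^2+μ^3)) := by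
    simp only [qI14, PI14]; push_cast; ring
  have hh := hneg5 μm μ hL hgt.le
  nlinarith [mul_pos (sub_pos.mpr hgt) (neg_pos.mpr hh)]

lemma qneg6 (μm μ : ℝ) (hμm : 0 < μm) (hq : qI14 6 μm = 0)
    (hmin : ∀ x : ℝ, 0 < x → qI14 6 x = 0 → μm ≤ x) (hgt : μm < μ) :
    qI14 6 μ < 0 := by
  have hL : 31/10 ≤ μm := by
    by_contra hc
    push_neg at hc
    exact absurd hq (ne_of_gt (qpos6 μm hμm hc.le))
  have e : qI14 6 μ - qI14 6 μm = (μ - μm) * (125 + (315/2)*(μm+μ) + 25*(μm^2+μm*μ+μ^2) + (-33/2)*(μm^3+μm^2*μ+μm*μ^2+μ^3)) := by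
    simp only [qI14, PI14]; push_cast; ring
  have hh := hneg6 μm μ hL hgt.le
  nlinarith [mul_pos (sub_pos.mpr hgt) (neg_pos.mpr hh)]

lemma qneg7 (μm μ : ℝ) (hμm : 0 < μm) (hq : qI14 7 μm = 0)
    (hmin : ∀ x : ℝ, 0 < x → qI14 7 x = 0 → μm ≤ x) (hgt : μm < μ) :
    qI14 7 μ < 0 := by
  have hL : 13/2 ≤ μm := by
    by_contra hc
    push_neg at hc
    exact absurd hq (ne_of_gt (qpos7 μm hμm hc.le))
  have e : qI14 7 μ - qI14 7 μm = (μ - μm) * (150 + 245*(μm+μ) + 90*(μm^2+μm*μ+μ^2) + -14*(μm^3+μm^2*μ+μm*μ^2+μ^3)) := by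
    simp only [qI14, PI14]; push_cast; ring
  have hh := hneg7 μm μ hL hgt.le
  nlinarith [mul_pos (sub_pos.mpr hgt) (neg_pos.mpr hh)]

lemma conv1 (μm μ : ℝ) (hμm : 0 < μm) (hq : qI14 1 μm = 0)
    (hmin : ∀ x : ℝ, 0 < x → qI14 1 x = 0 → μm ≤ x) (hgt : μm < μ) :
    ∃ η : ℂ, PI14c 1 μ η = 0 ∧ 1/2 < η.re := by
  have hμ : 0 < μ := lt_trans hμm hgt
  by_cases hc : μ ≤ 2
  · have hneg : qI14 1 μ < 0 := qneg1 μm μ hμm hq hmin hgt hc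
    exact not_stable_of_neg 1 μ hμ (1/2) le_rfl (by norm_num) hneg
  push_neg at hc
  by_cases hc2 : μ ≤ 27/10
  · have e : qI14 1 μ = (μ^2 - 16)*(μ^2 - 3/2) := by
      simp only [qI14, PI14]; push_cast; ring
    have hneg : qI14 1 μ < 0 := by
      rw [e]
      apply mul_neg_of_neg_of_pos <;> nlinarith
    exact not_stable_of_neg 1 μ hμ (1/2) le_rfl (by norm_num) hneg
  push_neg at hc2
  have hw : PI14 1 μ (4/5) < 0 := by
    have e : PI14 1 μ (4/5) = 24 + 30*μ + (7/5)*μ^2 - (138/25)*μ^3 - (91/125)*μ^4 := by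
      simp only [PI14]; push_cast; ring
    rw [e]
    nlinarith [mul_nonneg (sub_nonneg.mpr hc2.le) (sub_nonneg.mpr hc2.le), mul_nonneg (mul_nonneg (sub_nonneg.mpr hc2.le) (sub_nonneg.mpr hc2.le)) (sub_nonneg.mpr hc2.le), mul_nonneg (mul_nonneg (mul_nonneg (sub_nonneg.mpr hc2.le) (sub_nonneg.mpr hc2.le)) (sub_nonneg.mpr hc2.le)) (sub_nonneg.mpr hc2.le), sq_nonneg μ, hμ.le]
  exact not_stable_of_neg 1 μ hμ (4/5) (by norm_num) (by norm_num) hw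

lemma conv2 (μm μ : ℝ) (hμm : 0 < μm) (hq : qI14 2 μm = 0)
    (hmin : ∀ x : ℝ, 0 < x → qI14 2 x = 0 → μm ≤ x) (hgt : μm < μ) :
    ∃ η : ℂ, PI14c 2 μ η = 0 ∧ 1/2 < η.re := by
  have hμ : 0 < μ := lt_trans hμm hgt
  by_cases hc : μ ≤ 14/5
  · have hneg : qI14 2 μ < 0 := qneg2 μm μ hμm hq hmin hgt hc
    exact not_stable_of_neg 2 μ hμ (1/2) le_rfl (by norm_num) hneg
  push_neg at hc
  have hw : PI14 2 μ (7/10) < 0 := by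
    have e : PI14 2 μ (7/10) = 24 + 55*μ + (203/10)*μ^2 - 10*μ^3 - (358/125)*μ^4 := by
      simp only [PI14]; push_cast; ring
    rw [e]
    nlinarith [mul_nonneg (sub_nonneg.mpr hc.le) (sub_nonneg.mpr hc.le), mul_nonneg (mul_nonneg (sub_nonneg.mpr hc.le) (sub_nonneg.mpr hc.le)) (sub_nonneg.mpr hc.le), mul_nonneg (mul_nonneg (mul_nonneg (sub_nonneg.mpr hc.le) (sub_nonneg.mpr hc.le)) (sub_nonneg.mpr hc.le)) (sub_nonneg.mpr hc.le), sq_nonneg μ, hμ.le]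
  exact not_stable_of_neg 2 μ hμ (7/10) (by norm_num) (by norm_num) hw

lemma conv3 (μm μ : ℝ) (hμm : 0 < μm) (hq : qI14 3 μm = 0)
    (hmin : ∀ x : ℝ, 0 < x → qI14 3 x = 0 → μm ≤ x) (hgt : μm < μ) :
    ∃ η : ℂ, PI14c 3 μ η = 0 ∧ 1/2 < η.re := by
  have hμ : 0 < μ := lt_trans hμm hgt
  have hneg : qI14 3 μ < 0 := qneg3 μm μ hμm hq hmin hgt
  exact not_stable_of_neg 3 μ hμ (1/2) le_rfl (by norm_num) hneg

lemma conv4 (μm μ : ℝ) (hμm : 0 < μm) (hq : qI14 4 μm = 0)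
    (hmin : ∀ x : ℝ, 0 < x → qI14 4 x = 0 → μm ≤ x) (hgt : μm < μ) :
    ∃ η : ℂ, PI14c 4 μ η = 0 ∧ 1/2 < η.re := by
  have hμ : 0 < μ := lt_trans hμm hgt
  have hneg : qI14 4 μ < 0 := qneg4 μm μ hμm hq hmin hgt
  exact not_stable_of_neg 4 μ hμ (1/2) le_rfl (by norm_num) hneg

lemma conv5 (μm μ : ℝ) (hμm : 0 < μm) (hq : qI14 5 μm = 0)
    (hmin : ∀ x : ℝ, 0 < x → qI14 5 x = 0 → μm ≤ x) (hgt : μm < μ) :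
    ∃ η : ℂ, PI14c 5 μ η = 0 ∧ 1/2 < η.re := by
  have hμ : 0 < μ := lt_trans hμm hgt
  have hneg : qI14 5 μ < 0 := qneg5 μm μ hμm hq hmin hgt
  exact not_stable_of_neg 5 μ hμ (1/2) le_rfl (by norm_num) hneg

lemma conv6 (μm μ : ℝ) (hμm : 0 < μm) (hq : qI14 6 μm = 0)
    (hmin : ∀ x : ℝ, 0 < x → qI14 6 x = 0 → μm ≤ x) (hgt : μm < μ) :
    ∃ η : ℂ, PI14c 6 μ η = 0 ∧ 1/2 < η.re := by
  have hμ : 0 < μ := lt_trans hμm hgt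
  have hneg : qI14 6 μ < 0 := qneg6 μm μ hμm hq hmin hgt
  exact not_stable_of_neg 6 μ hμ (1/2) le_rfl (by norm_num) hneg

lemma conv7 (μm μ : ℝ) (hμm : 0 < μm) (hq : qI14 7 μm = 0)
    (hmin : ∀ x : ℝ, 0 < x → qI14 7 x = 0 → μm ≤ x) (hgt : μm < μ) :
    ∃ η : ℂ, PI14c 7 μ η = 0 ∧ 1/2 < η.re := by
  have hμ : 0 < μ := lt_trans hμm hgt
  have hneg : qI14 7 μ < 0 := qneg7 μm μ hμm hq hmin hgt
  exact not_stable_of_neg 7 μ hμ (1/2) le_rfl (by norm_num) hneg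

/-- Localization of the roots of `P_μ^m` for type `I_{1,4}`: for `m ≥ 8` all
roots lie in `{Re η ≤ 1/2}` for every `μ > 0`; for `1 ≤ m ≤ 7` this holds iff
`0 < μ ≤ μ_m`, `μ_m` being the smallest positive root of `q_m`. -/
theorem PI14_roots_localization :
    (∀ m : ℕ, 8 ≤ m → ∀ μ : ℝ, 0 < μ →
      ∀ η : ℂ, PI14c m μ η = 0 → η.re ≤ 1 / 2) ∧
    (∀ m : ℕ, 1 ≤ m → m ≤ 7 → ∀ μm : ℝ, 0 < μm → qI14 m μm = 0 →
      (∀ x : ℝ, 0 < x → qI14 m x = 0 → μm ≤ x) →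
      ∀ μ : ℝ, 0 < μ →
        ((∀ η : ℂ, PI14c m μ η = 0 → η.re ≤ 1 / 2) ↔ μ ≤ μm)) := by
  constructor
  · intro m hm μ hμ
    exact stable_big m hm μ hμ
  · intro m h1 h7 μm hμm hq hmin μ hμ
    interval_cases m
    · constructor
      · intro hstab
        by_contra hgt
        push_neg at hgt
        obtain ⟨η, hroot, hre⟩ := conv1 μm μ hμm hq hmin hgt
        exact absurd (hstab η hroot) (not_le.mpr hre)
      · intro hle
        exact stab1 μ hμ (le_of_lt (lt_of_le_of_lt hle (mum_lt1 μm hμm hq hmin)))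
          (b0_nonneg 1 μm μ hμ hq hmin hle)
    · constructor
      · intro hstab
        by_contra hgt
        push_neg at hgt
        obtain ⟨η, hroot, hre⟩ := conv2 μm μ hμm hq hmin hgt
        exact absurd (hstab η hroot) (not_le.mpr hre)
      · intro hle
        exact stab2 μ hμ (le_of_lt (lt_of_le_of_lt hle (mum_lt2 μm hμm hq hmin)))
          (b0_nonneg 2 μm μ hμ hq hmin hle)
    · constructor
      · intro hstab
        by_contra hgt
        push_neg at hgt
        obtain ⟨η, hroot, hre⟩ := conv3 μm μ hμm hq hmin hgt
        exact absurd (hstab η hroot) (not_le.mpr hre)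
      · intro hle
        exact stab3 μ hμ (le_of_lt (lt_of_le_of_lt hle (mum_lt3 μm hμm hq hmin)))
          (b0_nonneg 3 μm μ hμ hq hmin hle)
    · constructor
      · intro hstab
        by_contra hgt
        push_neg at hgt
        obtain ⟨η, hroot, hre⟩ := conv4 μm μ hμm hq hmin hgt
        exact absurd (hstab η hroot) (not_le.mpr hre)
      · intro hle
        exact stab4 μ hμ (le_of_lt (lt_of_le_of_lt hle (mum_lt4 μm hμm hq hmin)))
          (b0_nonneg 4 μm μ hμ hq hmin hle)
    · constructor
      · intro hstab
        by_contra hgt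
        push_neg at hgt
        obtain ⟨η, hroot, hre⟩ := conv5 μm μ hμm hq hmin hgt
        exact absurd (hstab η hroot) (not_le.mpr hre)
      · intro hle
        exact stab5 μ hμ (le_of_lt (lt_of_le_of_lt hle (mum_lt5 μm hμm hq hmin)))
          (b0_nonneg 5 μm μ hμ hq hmin hle)
    · constructor
      · intro hstab
        by_contra hgt
        push_neg at hgt
        obtain ⟨η, hroot, hre⟩ := conv6 μm μ hμm hq hmin hgt
        exact absurd (hstab η hroot) (not_le.mpr hre)
      · intro hle
        exact stab6 μ hμ (le_of_lt (lt_of_le_of_lt hle (mum_lt6 μm hμm hq hmin)))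
          (b0_nonneg 6 μm μ hμ hq hmin hle)
    · constructor
      · intro hstab
        by_contra hgt
        push_neg at hgt
        obtain ⟨η, hroot, hre⟩ := conv7 μm μ hμm hq hmin hgt
        exact absurd (hstab η hroot) (not_le.mpr hre)
      · intro hle
        exact stab7 μ hμ (le_of_lt (lt_of_le_of_lt hle (mum_lt7 μm hμm hq hmin)))
          (b0_nonneg 7 μm μ hμ hq hmin hle)
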